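/- arXiv:1203.3418 — 5 statements merged into one kernel-verified Lean document; each statement's English description precedes it below -/
import Mathlib

section
/- Let G be a non-compact finite-dimensional real Lie group and let E := C^∞(G) be the space of smooth complex-valued functions on G with the compact-open C^∞-topology, made a topological G-module via π(g,γ)(x) := γ(g^{-1}x). Then neither E nor E^∞ is a topological C^∞_c(G)-module; that is, both maps (γ,v) ↦ Π(γ,v), C^∞_c(G) × E → E and C^∞_c(G) × E^∞ → E^∞, are discontinuous. -/
open Filter Topology Set MeasureTheory
open scoped Pointwise ENNReal

set_option linter.unusedSectionVars false

noncomputable section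

section MB

variable {X E : Type*} [AddCommGroup X] [Module ℝ X] [TopologicalSpace X]
  [AddCommGroup E] [Module ℝ E] [TopologicalSpace E]

/-- The (Gateaux) directional derivative of `f` at `x` in direction `v`. -/
def HasDirDerivAt (f : X → E) (x v : X) (y : E) : Prop :=
  Tendsto (fun t : ℝ => t⁻¹ • (f (x + t • v) - f x)) (𝓝[≠] (0 : ℝ)) (𝓝 y)

/-- A family of iterated directional derivatives of `f` on `U`, witnessing smoothness
in the Michal–Bastiani sense: `D j x v` represents `d^{(j)}f(x; v 0, …, v (j-1))`. -/
structure MBDerivFamily (f : X → E) (U : Set X) where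
  D : ℕ → X → (ℕ → X) → E
  d_zero : ∀ x v, D 0 x v = f x
  hasDeriv : ∀ (j : ℕ) (x : X) (v : ℕ → X), x ∈ U →
    HasDirDerivAt (fun x' => D j x' v) x (v j) (D (j + 1) x v)
  depends : ∀ (j : ℕ) (x : X) (v w : ℕ → X), (∀ i < j, v i = w i) → D j x v = D j x w
  cont : ∀ j : ℕ, ContinuousOn (fun p : X × (ℕ → X) => D j p.1 p.2)
    (U ×ˢ (univ : Set (ℕ → X)))

/-- `f` is `C^∞` on `U` in the Michal–Bastiani sense: `f` is continuous on `U` and all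
iterated directional derivatives exist on `U` and are continuous. -/
def IsMBSmoothOn (f : X → E) (U : Set X) : Prop :=
  ContinuousOn f U ∧ Nonempty (MBDerivFamily f U)

theorem HasDirDerivAt.add' [ContinuousAdd E] {f g : X → E} {x v : X} {y₁ y₂ : E}
    (hf : HasDirDerivAt f x v y₁) (hg : HasDirDerivAt g x v y₂) :
    HasDirDerivAt (fun x' => f x' + g x') x v (y₁ + y₂) := by
  have h := hf.add hg
  refine h.congr fun t => ?_
  rw [← smul_add, add_sub_add_comm]

theorem HasDirDerivAt.constSMul {R : Type*} [Semiring R] [Module R E]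
    [SMulCommClass R ℝ E] [TopologicalSpace R] [ContinuousConstSMul R E]
    (c : R) {f : X → E} {x v : X} {y : E} (hf : HasDirDerivAt f x v y) :
    HasDirDerivAt (fun x' => c • f x') x v (c • y) := by
  have h := hf.const_smul c
  refine h.congr fun t => ?_
  rw [← smul_sub, smul_comm]

theorem IsMBSmoothOn.add {f g : X → E} {U : Set X} [ContinuousAdd E]
    (hf : IsMBSmoothOn f U) (hg : IsMBSmoothOn g U) : IsMBSmoothOn (f + g) U := by
  obtain ⟨hfc, ⟨F⟩⟩ := hf
  obtain ⟨hgc, ⟨G⟩⟩ := hg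
  refine ⟨hfc.add hgc, ⟨⟨fun j x v => F.D j x v + G.D j x v, ?_, ?_, ?_, ?_⟩⟩⟩
  · intro x v; simp [F.d_zero, G.d_zero]
  · intro j x v hx
    exact (F.hasDeriv j x v hx).add' (G.hasDeriv j x v hx)
  · intro j x v w h; rw [F.depends j x v w h, G.depends j x v w h]
  · intro j; exact (F.cont j).add (G.cont j)

theorem IsMBSmoothOn.constSMul {R : Type*} [Semiring R] [Module R E]
    [SMulCommClass R ℝ E] [TopologicalSpace R] [ContinuousConstSMul R E]
    (c : R) {f : X → E} {U : Set X} (hf : IsMBSmoothOn f U) :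
    IsMBSmoothOn (c • f) U := by
  obtain ⟨hfc, ⟨F⟩⟩ := hf
  refine ⟨hfc.const_smul c, ⟨⟨fun j x v => c • F.D j x v, ?_, ?_, ?_, ?_⟩⟩⟩
  · intro x v; simp [F.d_zero]
  · intro j x v hx
    exact (F.hasDeriv j x v hx).constSMul c
  · intro j x v w h; rw [F.depends j x v w h]
  · intro j; exact (F.cont j).const_smul c

theorem isMBSmoothOn_zero (U : Set X) : IsMBSmoothOn (0 : X → E) U := by
  refine ⟨continuousOn_const, ⟨⟨fun _ _ _ => 0, fun _ _ => rfl, ?_, fun _ _ _ _ _ => rfl,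
    fun _ => continuousOn_const⟩⟩⟩
  intro j x v hx
  unfold HasDirDerivAt
  simpa using tendsto_const_nhds

end MB

section Manifold

variable (k : ℕ) {G E : Type*} [TopologicalSpace G]
  [ChartedSpace (EuclideanSpace ℝ (Fin k)) G]
  [AddCommGroup E] [Module ℝ E] [TopologicalSpace E]

/-- A map from a manifold `G` (modelled on `ℝ^k`) to a locally convex space `E` is
smooth (in the Michal–Bastiani sense) if it is continuous and `C^∞` in all charts. -/
def MBSmooth (f : G → E) : Prop :=
  Continuous f ∧ ∀ x : G,
    IsMBSmoothOn (f ∘ (chartAt (EuclideanSpace ℝ (Fin k)) x).symm)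
      (chartAt (EuclideanSpace ℝ (Fin k)) x).target

theorem MBSmooth.add [ContinuousAdd E] {f g : G → E} (hf : MBSmooth k f)
    (hg : MBSmooth k g) : MBSmooth k (f + g) :=
  ⟨hf.1.add hg.1, fun x => (hf.2 x).add (hg.2 x)⟩

theorem MBSmooth.constSMul {R : Type*} [Semiring R] [Module R E]
    [SMulCommClass R ℝ E] [TopologicalSpace R] [ContinuousConstSMul R E]
    (c : R) {f : G → E} (hf : MBSmooth k f) : MBSmooth k (c • f) :=
  ⟨hf.1.const_smul c, fun x => (hf.2 x).constSMul c⟩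

theorem mbSmooth_zero : MBSmooth k (0 : G → E) :=
  ⟨continuous_const, fun _ => isMBSmoothOn_zero _⟩

end Manifold

section Spaces

variable (k : ℕ) (G : Type*) [TopologicalSpace G]
  [ChartedSpace (EuclideanSpace ℝ (Fin k)) G]
  (E : Type*) [AddCommGroup E] [Module ℂ E] [Module ℝ E] [IsScalarTower ℝ ℂ E]
  [SMulCommClass ℂ ℝ E] [TopologicalSpace E] [IsTopologicalAddGroup E]
  [ContinuousConstSMul ℂ E]

/-- The space `C^∞(G,E)` of smooth `E`-valued maps on `G`, as a subspace of `G → E`. -/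
def smoothSubmodule : Submodule ℂ (G → E) where
  carrier := {f | MBSmooth k f}
  add_mem' hf hg := hf.add k hg
  zero_mem' := mbSmooth_zero k
  smul_mem' c _f hf := hf.constSMul k c

/-- The space `C^∞(G,E)` of smooth `E`-valued maps on `G`. -/
def SmoothMap' : Type _ := ↥(smoothSubmodule k G E)

instance : AddCommGroup (SmoothMap' k G E) :=
  inferInstanceAs (AddCommGroup ↥(smoothSubmodule k G E))

instance : Module ℂ (SmoothMap' k G E) :=
  inferInstanceAs (Module ℂ ↥(smoothSubmodule k G E))

instance : Module ℝ (SmoothMap' k G E) :=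
  inferInstanceAs (Module ℝ ↥(smoothSubmodule k G E))

/-- A choice of a family of iterated directional derivatives of `f` on `U`. -/
def mbD {X F : Type*} [AddCommGroup X] [Module ℝ X] [TopologicalSpace X]
    [AddCommGroup F] [Module ℝ F] [TopologicalSpace F]
    (f : X → F) (U : Set X) : ℕ → X → (ℕ → X) → F :=
  letI := Classical.dec (IsMBSmoothOn f U)
  if h : IsMBSmoothOn f U then h.2.some.D else fun _ _ _ => 0

/-- The `j`-th iterated derivative of `γ ∈ C^∞(G,E)` read in the chart at `x`, as a
continuous map on `(chart target) × (directions)`. -/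
def chartDMap (x : G) (j : ℕ) (γ : SmoothMap' k G E) :
    C(↥(((chartAt (EuclideanSpace ℝ (Fin k)) x).target) ×ˢ
        (univ : Set (ℕ → EuclideanSpace ℝ (Fin k)))), E) := by
  refine ⟨fun p => mbD (γ.1 ∘ (chartAt (EuclideanSpace ℝ (Fin k)) x).symm)
    (chartAt (EuclideanSpace ℝ (Fin k)) x).target j p.val.1 p.val.2, ?_⟩
  have h : IsMBSmoothOn (γ.1 ∘ (chartAt (EuclideanSpace ℝ (Fin k)) x).symm)
      (chartAt (EuclideanSpace ℝ (Fin k)) x).target := γ.2.2 x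
  simp only [mbD, dif_pos h]
  exact (h.2.some.cont j).restrict

/-- The compact-open `C^∞`-topology on `C^∞(G,E)`: the initial topology with respect
to all the chart-derivative maps (with the compact-open topology on their targets). -/
instance : TopologicalSpace (SmoothMap' k G E) :=
  ⨅ (x : G) (j : ℕ), TopologicalSpace.induced (chartDMap k G E x j) inferInstance

end Spaces

section Vectors

variable (k : ℕ) {G : Type*} [Group G] [TopologicalSpace G]
  [ChartedSpace (EuclideanSpace ℝ (Fin k)) G]

/-- The space of test functions `C^∞_c(G)` (compactly supported smooth functions),
as a subspace of `G → ℂ`. -/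
def testSubmodule : Submodule ℂ (G → ℂ) where
  carrier := {γ | MBSmooth k γ ∧ HasCompactSupport γ}
  add_mem' hf hg := ⟨hf.1.add k hg.1, hf.2.add hg.2⟩
  zero_mem' := ⟨mbSmooth_zero k, by
    simpa [HasCompactSupport, tsupport] using isCompact_empty⟩
  smul_mem' c γ hγ := ⟨hγ.1.constSMul k c,
    hγ.2.mono (Function.support_const_smul_subset c γ)⟩

variable {E : Type*} [AddCommGroup E] [Module ℂ E] [Module ℝ E]
  [IsScalarTower ℝ ℂ E] [SMulCommClass ℂ ℝ E] [TopologicalSpace E]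
  [IsTopologicalAddGroup E] [ContinuousConstSMul ℂ E]

/-- The space `E^∞` of smooth vectors of a topological `G`-module `(E,π)`. -/
def smoothVectors (π : G → E → E) (hπlin : ∀ g, IsLinearMap ℂ (π g)) :
    Submodule ℂ E where
  carrier := {v | MBSmooth k fun g => π g v}
  add_mem' {v w} hv hw := by
    have h : (fun g => π g (v + w)) = (fun g => π g v) + fun g => π g w :=
      funext fun g => (hπlin g).map_add v w
    rw [Set.mem_setOf_eq, h]
    exact hv.add k hw
  zero_mem' := by
    have h : (fun g => π g (0 : E)) = (0 : G → E) :=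
      funext fun g => (hπlin g).map_zero
    rw [Set.mem_setOf_eq, h]
    exact mbSmooth_zero k
  smul_mem' c v hv := by
    have h : (fun g => π g (c • v)) = c • fun g => π g v :=
      funext fun g => (hπlin g).map_smul c v
    rw [Set.mem_setOf_eq, h]
    exact hv.constSMul k c

end Vectors

/-- `e` is the weak integral of `f` with respect to `μ`. -/
def IsWeakIntegral {α E : Type*} [MeasurableSpace α]
    [AddCommGroup E] [Module ℂ E] [TopologicalSpace E]
    (μ : Measure α) (f : α → E) (e : E) : Prop :=
  ∀ l : E →L[ℂ] ℂ, Integrable (fun a => l (f a)) μ ∧ ∫ a, l (f a) ∂μ = l e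

/-- A locally convex space is sequentially complete if every Cauchy sequence converges. -/
def SeqComplete (E : Type*) [UniformSpace E] : Prop :=
  ∀ u : ℕ → E, CauchySeq u → ∃ x, Tendsto u atTop (𝓝 x)

/-- The metric convex compactness property: every metrizable compact subset has a
relatively compact convex hull. -/
def MetricCCP (E : Type*) [AddCommGroup E] [Module ℝ E] [TopologicalSpace E] : Prop :=
  ∀ K : Set E, IsCompact K → TopologicalSpace.MetrizableSpace K →
    IsCompact (closure (convexHull ℝ K))

section Helpers

variable (k : ℕ) {G : Type*} [Group G] [TopologicalSpace G]
  [ChartedSpace (EuclideanSpace ℝ (Fin k)) G]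

theorem mem_testSubmodule {γ : G → ℂ} :
    γ ∈ testSubmodule k (G := G) ↔ MBSmooth k γ ∧ HasCompactSupport γ :=
  Iff.rfl

/-- The inclusion `C^∞_c(G) → C^∞(G)`. -/
def toSmoothMap (γ : ↥(testSubmodule k (G := G))) : SmoothMap' k G ℂ :=
  ⟨γ.1, ((mem_testSubmodule k).mp γ.2).1⟩

variable {E : Type*} [AddCommGroup E] [Module ℂ E] [Module ℝ E]
  [IsScalarTower ℝ ℂ E] [SMulCommClass ℂ ℝ E] [TopologicalSpace E]
  [IsTopologicalAddGroup E] [ContinuousConstSMul ℂ E]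

/-- The map `Φ : E^∞ → C^∞(G,E)`, `v ↦ π_v` (the orbit map), which induces the
topology of `E^∞`. -/
def orbitMap (π : G → E → E) (hπlin : ∀ g, IsLinearMap ℂ (π g))
    (v : ↥(smoothVectors k π hπlin)) : SmoothMap' k G E :=
  ⟨fun g => π g v.1, v.2⟩

end Helpers

/-- A seminorm `p` on a topological `G`-module is `G`-continuous if the action
`π : G × (E,p) → (E,p)` is continuous. -/
def GContSeminorm {G E : Type*} [TopologicalSpace G] [AddCommGroup E] [Module ℂ E]
    (π : G → E → E) (p : Seminorm ℂ E) : Prop :=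
  ∀ (g : G) (v : E), ∀ ε > 0, ∃ U ∈ 𝓝 g, ∃ δ > 0,
    ∀ g' ∈ U, ∀ v' : E, p (v' - v) < δ → p (π g' v' - π g v) < ε

/-- A topological `G`-module is proto-Banach if its topology is defined by a set of
`G`-continuous seminorms. -/
def ProtoBanach {G E : Type*} [TopologicalSpace G] [AddCommGroup E] [Module ℂ E]
    [TopologicalSpace E] (π : G → E → E) : Prop :=
  ∃ s : Set (Seminorm ℂ E), ∃ hs : s.Nonempty,
    (letI : Nonempty s := hs.to_subtype
     WithSeminorms fun p : s => (p : Seminorm ℂ E)) ∧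
    ∀ p ∈ s, GContSeminorm π p

section MoreInstances

variable (k : ℕ) (G : Type*) [TopologicalSpace G]
  [ChartedSpace (EuclideanSpace ℝ (Fin k)) G]
  (E : Type*) [AddCommGroup E] [Module ℂ E] [Module ℝ E] [IsScalarTower ℝ ℂ E]
  [SMulCommClass ℂ ℝ E] [TopologicalSpace E] [IsTopologicalAddGroup E]
  [ContinuousConstSMul ℂ E]

instance : IsScalarTower ℝ ℂ (SmoothMap' k G E) :=
  inferInstanceAs (IsScalarTower ℝ ℂ ↥(smoothSubmodule k G E))

instance : SMulCommClass ℂ ℝ (SmoothMap' k G E) := by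
  constructor
  intro c r x
  apply Subtype.ext
  exact smul_comm c r x.1

end MoreInstances

open scoped Manifold

/-!
Evaluated at the identity, `Π(γ, v)(1) = ∫ γ(x) v(x⁻¹) dx` is bilinear, so continuity of `Π`
at `(0, 0)` would give neighbourhoods `U` and `V` of `0` with `|Π(γ, v)(1)| < 1` on `U × V`.
A neighbourhood `V` of `0` in `C^∞(G)` only sees finitely many derivatives over a compact set
`K`, so it contains every function vanishing near `K`, with all its scalar multiples; the same
holds in `E^∞` with `K` enlarged, because `E^∞` is topologized through the orbit map. As `G` is
not compact, a bump `u` can be placed away from `K`, and `v = Π(γ₂, u)` with `γ₂` a bump at `1`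
still vanishes near `K` while being a smooth vector for free. A bump `γ` at `z⁻¹`, where
`v(z) > 0`, gives `Π(γ, v)(1) ≠ 0`; then `tγ ∈ U` for small `t ≠ 0` and `cv ∈ V` for every `c`,
but `Π(tγ, cv)(1) = tc Π(γ, v)(1)` is unbounded in `c`.
-/

theorem not_continuousAt_zero_of_homogeneous {A B : Type*} [TopologicalSpace A] [AddCommGroup A]
    [Module ℂ A] [ContinuousSMul ℂ A] [TopologicalSpace B] [AddCommGroup B] [Module ℂ B]
    {f : A × B → ℂ} (hf : ∀ (s c : ℂ) (a : A) (b : B), f (s • a, c • b) = s * c * f (a, b))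
    (hB : ∀ V ∈ 𝓝 (0 : B), ∃ a b, (∀ c : ℂ, c • b ∈ V) ∧ f (a, b) ≠ 0) :
    ¬ ContinuousAt f (0, 0) := by
  intro hcont
  have hf0 : f (0, 0) = 0 := by simpa using hf 0 0 0 0
  obtain ⟨U, hU, V, hV, hUV⟩ :=
    mem_nhds_prod_iff.1 (hcont (hf0 ▸ Metric.ball_mem_nhds (0 : ℂ) one_pos))
  obtain ⟨a, b, hbV, hab⟩ := hB V hV
  have hsmul : Tendsto (fun s : ℂ => s • a) (𝓝[≠] 0) (𝓝 0) :=
    tendsto_nhdsWithin_of_tendsto_nhds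
      ((continuous_id.smul continuous_const).tendsto' 0 0 (zero_smul ℂ a))
  obtain ⟨s, hsU, hs⟩ := ((hsmul.eventually hU).and self_mem_nhdsWithin).exists
  have h2 : f (s • a, (2 / (s * f (a, b))) • b) = 2 := by
    rw [hf]
    field_simp [show s ≠ 0 from hs]
  have hball := hUV (mk_mem_prod hsU (hbV (2 / (s * f (a, b)))))
  rw [mem_preimage, h2, hf0, Metric.mem_ball, dist_zero_right] at hball
  norm_num at hball

theorem HasFDerivAt.hasDirDerivAt {X F : Type*} [NormedAddCommGroup X] [NormedSpace ℝ X]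
    [NormedAddCommGroup F] [NormedSpace ℝ F] {f : X → F} {f' : X →L[ℝ] F} {x : X}
    (h : HasFDerivAt f f' x) (v : X) : HasDirDerivAt f x v (f' v) := by
  have hline : HasDerivAt (fun t : ℝ => x + t • v) v 0 := by
    simpa using ((hasDerivAt_id (0 : ℝ)).smul_const v).const_add x
  have hcomp : HasDerivAt (fun t : ℝ => f (x + t • v)) (f' v) 0 :=
    (by simpa using h : HasFDerivAt f f' (x + (0 : ℝ) • v)).comp_hasDerivAt 0 hline
  rw [hasDerivAt_iff_tendsto_slope] at hcomp
  exact hcomp.congr fun t => by simp [slope]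

namespace MBDerivFamily

variable {X F F' : Type*} [AddCommGroup X] [Module ℝ X] [TopologicalSpace X]
  [IsTopologicalAddGroup X] [ContinuousSMul ℝ X]
  [AddCommGroup F] [Module ℝ F] [TopologicalSpace F]
  [AddCommGroup F'] [Module ℝ F'] [TopologicalSpace F'] [T2Space F']
  {f : X → F} {U : Set X}

theorem map_D_eq_zero_of_isOpen (D : MBDerivFamily f U) (ℓ : F →L[ℝ] F') {W : Set X}
    (hW : IsOpen W) (hWU : W ⊆ U) (hfW : ∀ x ∈ W, ℓ (f x) = 0) (j : ℕ) :
    ∀ x ∈ W, ∀ v, ℓ (D.D j x v) = 0 := by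
  induction j with
  | zero => intro x hx v; rw [D.d_zero]; exact hfW x hx
  | succ j ih =>
    intro x hx v
    have hline : Tendsto (fun t : ℝ => x + t • v j) (𝓝[≠] 0) (𝓝 x) := by
      refine tendsto_nhdsWithin_of_tendsto_nhds ?_
      exact (by fun_prop : Continuous fun t : ℝ => x + t • v j).tendsto' 0 x (by simp)
    -- the difference quotients of `ℓ ∘ D j` vanish near `0`, so their limit does too
    have hquot : ∀ᶠ t : ℝ in 𝓝[≠] 0, ℓ (t⁻¹ • (D.D j (x + t • v j) v - D.D j x v)) = 0 := by
      filter_upwards [hline.eventually (hW.eventually_mem hx)] with t ht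
      rw [map_smul, map_sub, ih _ ht, ih _ hx, sub_self, smul_zero]
    exact tendsto_nhds_unique (((ℓ.continuous.tendsto _).comp (D.hasDeriv j x v (hWU hx))))
      (tendsto_const_nhds.congr' (hquot.mono fun t ht => ht.symm))

theorem map_D_eq_zero (D : MBDerivFamily f U) (ℓ : F →L[ℝ] F') (hU : IsOpen U) {x : X}
    (hx : x ∈ U) (hfx : ∀ᶠ y in 𝓝 x, ℓ (f y) = 0) (j : ℕ) (v : ℕ → X) :
    ℓ (D.D j x v) = 0 :=
  D.map_D_eq_zero_of_isOpen ℓ (isOpen_interior.inter hU) inter_subset_right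
    (fun _ hy => interior_subset (s := {y | ℓ (f y) = 0}) hy.1) j x
    ⟨mem_interior_iff_mem_nhds.2 hfx, hx⟩ v

end MBDerivFamily

theorem ContDiffOn.isMBSmoothOn {X F : Type*} [NormedAddCommGroup X] [NormedSpace ℝ X]
    [NormedAddCommGroup F] [NormedSpace ℝ F]
    {f : X → F} {U : Set X} (hf : ContDiffOn ℝ (⊤ : ℕ∞) f U) (hU : IsOpen U) :
    IsMBSmoothOn f U := by
  -- `D j x v = d^j f(x; v (j-1), …, v 0)`: the newest direction goes first, matching
  -- `iteratedFDerivWithin_succ_apply_left`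
  refine ⟨hf.continuousOn, ⟨⟨fun j x v =>
    iteratedFDerivWithin ℝ j f U x (fun i : Fin j => v (j - 1 - i)), ?_, ?_, ?_, ?_⟩⟩⟩
  · intro x v; exact iteratedFDerivWithin_zero_apply _
  · intro j x v hx
    have hderiv : HasFDerivAt (iteratedFDerivWithin ℝ j f U)
        (fderivWithin ℝ (iteratedFDerivWithin ℝ j f U) U x) x := by
      rw [fderivWithin_of_isOpen hU hx]
      exact ((hf.differentiableOn_iteratedFDerivWithin (mod_cast WithTop.coe_lt_top _)
        hU.uniqueDiffOn) x hx).differentiableAt (hU.mem_nhds hx) |>.hasFDerivAt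
    have hval : iteratedFDerivWithin ℝ (j + 1) f U x (fun i : Fin (j + 1) => v (j + 1 - 1 - i))
        = fderivWithin ℝ (iteratedFDerivWithin ℝ j f U) U x (v j)
            (fun i : Fin j => v (j - 1 - i)) := by
      rw [iteratedFDerivWithin_succ_apply_left]
      congr 2
      funext i
      simp only [Fin.tail, Fin.val_succ]
      congr 1
      omega
    rw [hval]
    exact ((ContinuousMultilinearMap.apply ℝ (fun _ : Fin j => X) F
      (fun i : Fin j => v (j - 1 - i))).hasFDerivAt.comp x hderiv).hasDirDerivAt (v j)
  · intro j x v w h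
    exact congrArg _ (funext fun i => h _ (by omega))
  · intro j
    have hD : ContinuousOn (fun p : X × (ℕ → X) => iteratedFDerivWithin ℝ j f U p.1)
        (U ×ˢ univ) :=
      (hf.continuousOn_iteratedFDerivWithin (mod_cast le_top) hU.uniqueDiffOn).comp
        continuousOn_fst fun p hp => hp.1
    have hdirs : Continuous fun p : X × (ℕ → X) => fun i : Fin j => p.2 (j - 1 - i) :=
      continuous_pi fun i => (continuous_apply _).comp continuous_snd
    exact continuous_eval.comp_continuousOn (hD.prodMk hdirs.continuousOn)

theorem ContMDiff.mbSmooth {k : ℕ} {G F : Type*} [TopologicalSpace G]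
    [ChartedSpace (EuclideanSpace ℝ (Fin k)) G]
    [IsManifold (𝓡 k) (⊤ : ℕ∞) G]
    [NormedAddCommGroup F] [NormedSpace ℝ F] {f : G → F}
    (hf : ContMDiff (𝓡 k) 𝓘(ℝ, F) (⊤ : ℕ∞) f) : MBSmooth k f :=
  ⟨hf.continuous, fun _ =>
    (hf.comp_contMDiffOn contMDiffOn_chart_symm).contDiffOn.isMBSmoothOn (chartAt _ _).open_target⟩

def compactVanishing (X M : Type*) [TopologicalSpace X] [Zero M] : Filter (X → M) :=
  ⨅ (K : Set X) (_ : IsCompact K), 𝓟 {f | ∀ᶠ x in 𝓝ˢ K, f x = 0}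

theorem hasBasis_compactVanishing {X M : Type*} [TopologicalSpace X] [Zero M] :
    (compactVanishing X M).HasBasis IsCompact fun K => {f | ∀ᶠ x in 𝓝ˢ K, f x = 0} :=
  hasBasis_biInf_principal'
    (fun K hK L hL => ⟨K ∪ L, hK.union hL,
      fun _ hf => hf.filter_mono (nhdsSet_mono subset_union_left),
      fun _ hf => hf.filter_mono (nhdsSet_mono subset_union_right)⟩)
    ⟨∅, isCompact_empty⟩

section ChartDerivatives

variable {k : ℕ} {G : Type*} [TopologicalSpace G] [ChartedSpace (EuclideanSpace ℝ (Fin k)) G]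
  {E : Type*} [AddCommGroup E] [Module ℂ E] [Module ℝ E] [SMulCommClass ℂ ℝ E]
  [TopologicalSpace E] [IsTopologicalAddGroup E] [ContinuousConstSMul ℂ E]

theorem map_chartDMap_eq_zero {F : Type*} [AddCommGroup F] [Module ℝ F] [TopologicalSpace F]
    [T2Space F] (ℓ : E →L[ℝ] F) (w : SmoothMap' k G E) {x : G} {j : ℕ}
    {p : ↥((chartAt (EuclideanSpace ℝ (Fin k)) x).target ×ˢ
      (univ : Set (ℕ → EuclideanSpace ℝ (Fin k))))}
    (hw : ∀ᶠ g in 𝓝 ((chartAt (EuclideanSpace ℝ (Fin k)) x).symm p.1.1), ℓ (w.1 g) = 0) :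
    ℓ (chartDMap k G E x j w p) = 0 := by
  have h : IsMBSmoothOn (w.1 ∘ (chartAt (EuclideanSpace ℝ (Fin k)) x).symm)
      (chartAt (EuclideanSpace ℝ (Fin k)) x).target := w.2.2 x
  change ℓ (mbD _ _ j p.1.1 p.1.2) = 0
  rw [mbD, dif_pos h]
  exact h.2.some.map_D_eq_zero ℓ (chartAt _ x).open_target p.2.1
    (((chartAt _ x).continuousAt_symm p.2.1).eventually hw) j p.1.2

theorem chartDMap_zero [T2Space E] (x : G) (j : ℕ) : chartDMap k G E x j 0 = 0 :=
  ContinuousMap.ext fun _ =>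
    map_chartDMap_eq_zero (ContinuousLinearMap.id ℝ E) 0 (Eventually.of_forall fun _ => rfl)

theorem isCompact_chartAt_symm_image {x : G}
    {K : Set ↥((chartAt (EuclideanSpace ℝ (Fin k)) x).target ×ˢ
      (univ : Set (ℕ → EuclideanSpace ℝ (Fin k))))} (hK : IsCompact K) :
    IsCompact ((fun p => (chartAt (EuclideanSpace ℝ (Fin k)) x).symm p.1.1) '' K) :=
  hK.image <| (chartAt _ x).continuousOn_symm.comp_continuous
    (continuous_fst.comp continuous_subtype_val) fun p => p.2.1

theorem tendsto_nhds_zero_of_chartDMap [T2Space E] {α : Type*} {l : Filter α}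
    {Φ : α → SmoothMap' k G E}
    (h : ∀ (x : G) (j : ℕ) (K : Set ↥((chartAt (EuclideanSpace ℝ (Fin k)) x).target ×ˢ
        (univ : Set (ℕ → EuclideanSpace ℝ (Fin k))))), IsCompact K →
      ∀ U ∈ 𝓝 (0 : E), ∀ᶠ a in l, ∀ p ∈ K, chartDMap k G E x j (Φ a) p ∈ U) :
    Tendsto Φ l (𝓝 0) := by
  have hnhds : 𝓝 (0 : SmoothMap' k G E) =
      ⨅ (x : G) (j : ℕ), comap (chartDMap k G E x j) (𝓝 (chartDMap k G E x j 0)) := by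
    change @nhds _ (⨅ (x : G) (j : ℕ), .induced (chartDMap k G E x j) inferInstance) 0 = _
    simp only [nhds_iInf, nhds_induced]
  simp only [hnhds, tendsto_iInf, tendsto_comap_iff, chartDMap_zero,
    ContinuousMap.tendsto_nhds_compactOpen]
  intro x j K hK U hU h0
  rcases K.eq_empty_or_nonempty with rfl | ⟨p, hp⟩
  · exact Eventually.of_forall fun _ => mapsTo_empty _ _
  · exact h x j K hK U (hU.mem_nhds (h0 hp))

theorem comap_compactVanishing_le_nhds_zero [T2Space E] :
    comap (fun w : SmoothMap' k G E => w.1) (compactVanishing G E) ≤ 𝓝 0 :=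
  tendsto_id'.1 <| tendsto_nhds_zero_of_chartDMap fun x j _ hK _ hU => by
    filter_upwards [(hasBasis_compactVanishing.comap _).mem_of_mem
      (isCompact_chartAt_symm_image hK)] with w hw p hp
    have h0 : chartDMap k G E x j w p = 0 := map_chartDMap_eq_zero
      (ContinuousLinearMap.id ℝ E) w (hw.filter_mono (nhds_le_nhdsSet (mem_image_of_mem _ hp)))
    exact h0 ▸ mem_of_mem_nhds hU

end ChartDerivatives

section Evaluation

variable {k : ℕ} {G : Type*} [TopologicalSpace G] [ChartedSpace (EuclideanSpace ℝ (Fin k)) G]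
  {E : Type*} [AddCommGroup E] [Module ℂ E] [Module ℝ E] [SMulCommClass ℂ ℝ E]
  [TopologicalSpace E] [IsTopologicalAddGroup E] [ContinuousConstSMul ℂ E]

theorem continuous_eval_const_smoothMap' (x₀ : G) :
    Continuous fun w : SmoothMap' k G E => w.1 x₀ := by
  have hchart : Continuous (chartDMap k G E x₀ 0) :=
    continuous_iff_le_induced.2 (iInf_le_of_le x₀ (iInf_le _ 0))
  refine ((continuous_eval_const ⟨(chartAt _ x₀ x₀, 0), mem_chart_target _ x₀, mem_univ _⟩).comp
    hchart).congr fun w => ?_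
  change mbD _ _ 0 _ _ = _
  rw [mbD, dif_pos (w.2.2 x₀), (w.2.2 x₀).2.some.d_zero]
  exact congrArg w.1 ((chartAt _ x₀).left_inv (mem_chart_source _ x₀))

instance [T2Space E] : T2Space (SmoothMap' k G E) :=
  .of_injective_continuous (f := fun w : SmoothMap' k G E => w.1) Subtype.val_injective
    (continuous_pi continuous_eval_const_smoothMap')

variable (k G E) in
def evalCLM (x₀ : G) : SmoothMap' k G E →L[ℂ] E where
  toFun w := w.1 x₀
  map_add' _ _ := rfl
  map_smul' _ _ := rfl
  cont := continuous_eval_const_smoothMap' x₀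

theorem evalCLM_apply (x₀ : G) (w : SmoothMap' k G E) : evalCLM k G E x₀ w = w.1 x₀ :=
  rfl

end Evaluation

theorem tendsto_orbitMap_compactVanishing {k : ℕ} {G : Type*} [Group G] [TopologicalSpace G]
    [IsTopologicalGroup G] [ChartedSpace (EuclideanSpace ℝ (Fin k)) G]
    [IsTopologicalAddGroup (SmoothMap' k G ℂ)] [ContinuousConstSMul ℂ (SmoothMap' k G ℂ)]
    (π : G → SmoothMap' k G ℂ → SmoothMap' k G ℂ)
    (hπ : ∀ (g : G) (γ : SmoothMap' k G ℂ) (x : G), (π g γ).1 x = γ.1 (g⁻¹ * x))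
    (hπlin : ∀ g : G, IsLinearMap ℂ (π g)) :
    Tendsto (orbitMap k π hπlin)
      (comap (fun v : ↥(smoothVectors k π hπlin) => v.1.1) (compactVanishing G ℂ)) (𝓝 0) := by
  refine tendsto_nhds_zero_of_chartDMap fun x j K hK U hU => ?_
  obtain ⟨L, hL, hLU⟩ :=
    (hasBasis_compactVanishing.comap _).mem_iff.1 (comap_compactVanishing_le_nhds_zero hU)
  set C := (fun p => (chartAt (EuclideanSpace ℝ (Fin k)) x).symm p.1.1) '' K
  filter_upwards [(hasBasis_compactVanishing.comap _).mem_of_mem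
    ((isCompact_chartAt_symm_image hK).inv.mul hL)] with v hv p hp
  obtain ⟨W, hWo, hCLW, hvW⟩ := mem_nhdsSet_iff_exists.1 hv
  set g₀ := (chartAt (EuclideanSpace ℝ (Fin k)) x).symm p.1.1
  have hg₀ : g₀ ∈ C := mem_image_of_mem _ hp
  -- the `p`-derivative of `g ↦ π g v` vanishes at every `y` with `g₀⁻¹ y ∈ W`
  refine hLU (mem_nhdsSet_iff_exists.2 ⟨{y | g₀⁻¹ * y ∈ W}, hWo.preimage (by fun_prop),
    fun y hy => hCLW (mul_mem_mul (inv_mem_inv.2 hg₀) hy), fun y hy => ?_⟩)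
  have hnear : ∀ᶠ g in 𝓝 g₀, g⁻¹ * y ∈ W :=
    (by fun_prop : Continuous fun g : G => g⁻¹ * y).continuousAt.eventually (hWo.mem_nhds hy)
  exact map_chartDMap_eq_zero ((evalCLM k G ℂ y).restrictScalars ℝ) (orbitMap k π hπlin v)
    (hnear.mono fun g hg => (hπ g v.1 y).trans (hvW hg))

theorem orbitMap_zero {k : ℕ} {G : Type*} [Group G] [TopologicalSpace G]
    [ChartedSpace (EuclideanSpace ℝ (Fin k)) G] {E : Type*} [AddCommGroup E] [Module ℂ E]
    [Module ℝ E] [SMulCommClass ℂ ℝ E] [TopologicalSpace E] [IsTopologicalAddGroup E]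
    [ContinuousConstSMul ℂ E] (π : G → E → E) (hπlin : ∀ g, IsLinearMap ℂ (π g)) :
    orbitMap k π hπlin 0 = 0 :=
  Subtype.ext (funext fun g => (hπlin g).map_zero)

theorem continuous_coe_smoothVectors {k : ℕ} {G : Type*} [Group G] [TopologicalSpace G]
    [ChartedSpace (EuclideanSpace ℝ (Fin k)) G]
    [IsTopologicalAddGroup (SmoothMap' k G ℂ)] [ContinuousConstSMul ℂ (SmoothMap' k G ℂ)]
    (π : G → SmoothMap' k G ℂ → SmoothMap' k G ℂ)
    (hπ : ∀ (g : G) (γ : SmoothMap' k G ℂ) (x : G), (π g γ).1 x = γ.1 (g⁻¹ * x))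
    (hπlin : ∀ g : G, IsLinearMap ℂ (π g)) :
    Continuous[.induced (orbitMap k π hπlin) inferInstance, _]
      fun v : ↥(smoothVectors k π hπlin) => v.1 := by
  let _ : TopologicalSpace ↥(smoothVectors k π hπlin) :=
    .induced (orbitMap k π hπlin) inferInstance
  refine ((continuous_eval_const_smoothMap' 1).comp continuous_induced_dom).congr fun v => ?_
  exact Subtype.ext (funext fun x => (hπ 1 v.1 x).trans (by rw [inv_one, one_mul]))

theorem apply_eq_integral_of_isWeakIntegral {k : ℕ} {G : Type*} [Group G] [TopologicalSpace G]
    [ChartedSpace (EuclideanSpace ℝ (Fin k)) G] [MeasurableSpace G] {μ : Measure G}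
    (π : G → SmoothMap' k G ℂ → SmoothMap' k G ℂ)
    (hπ : ∀ (g : G) (γ : SmoothMap' k G ℂ) (x : G), (π g γ).1 x = γ.1 (g⁻¹ * x))
    {γ : ↥(testSubmodule k (G := G))} {v e : SmoothMap' k G ℂ}
    (he : IsWeakIntegral μ (fun x : G => γ.1 x • π x v) e) (x₀ : G) :
    e.1 x₀ = ∫ x, γ.1 x * v.1 (x⁻¹ * x₀) ∂μ := by
  simpa [evalCLM_apply, hπ] using (he (evalCLM k G ℂ x₀)).2.symm

theorem apply_smul_smul_of_eq_integral {k : ℕ} {G : Type*} [Group G] [TopologicalSpace G]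
    [ChartedSpace (EuclideanSpace ℝ (Fin k)) G] [MeasurableSpace G] {μ : Measure G}
    {Pi : ↥(testSubmodule k (G := G)) → SmoothMap' k G ℂ → SmoothMap' k G ℂ}
    (hPi : ∀ γ v x₀, (Pi γ v).1 x₀ = ∫ x, γ.1 x * v.1 (x⁻¹ * x₀) ∂μ)
    (s c : ℂ) (γ : ↥(testSubmodule k (G := G))) (v : SmoothMap' k G ℂ) (x₀ : G) :
    (Pi (s • γ) (c • v)).1 x₀ = s * c * (Pi γ v).1 x₀ := by
  simp only [hPi, ← integral_const_mul]
  congr 1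
  funext x
  change s * γ.1 x * (c * v.1 _) = _
  ring

section Bumps

variable {k : ℕ} {G : Type*} [TopologicalSpace G]
  [ChartedSpace (EuclideanSpace ℝ (Fin k)) G]
  [IsManifold (𝓡 k) (⊤ : ℕ∞) G] [T2Space G]

def SmoothBumpFunction.toTestFunction {c : G}
    (f : SmoothBumpFunction (𝓡 k) c) : ↥(testSubmodule k (G := G)) :=
  ⟨fun x => (f x : ℂ), (Complex.ofRealCLM.contMDiff.comp f.contMDiff).mbSmooth,
    f.hasCompactSupport.comp_left Complex.ofReal_zero⟩

@[simp]
theorem SmoothBumpFunction.toTestFunction_apply {c : G}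
    (f : SmoothBumpFunction (𝓡 k) c) (x : G) :
    (f.toTestFunction : G → ℂ) x = f x :=
  rfl

end Bumps

theorem integral_mul_pos_of_hasCompactSupport {X : Type*} [TopologicalSpace X]
    [MeasurableSpace X] [OpensMeasurableSpace X] (μ : Measure X) [μ.IsOpenPosMeasure]
    [IsFiniteMeasureOnCompacts μ] {f g : X → ℝ} (hf : Continuous f) (hg : Continuous g)
    (hfc : HasCompactSupport f) (hf0 : 0 ≤ f) (hg0 : 0 ≤ g) {x : X} (hx : f x * g x ≠ 0) :
    0 < ∫ y, f y * g y ∂μ :=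
  (hf.mul hg).integral_pos_of_hasCompactSupport_nonneg_nonzero hfc.mul_right
    (fun y => mul_nonneg (hf0 y) (hg0 y)) hx

theorem integral_mul_comp_eq_zero_of_notMem {G : Type*} [Group G] [TopologicalSpace G]
    [MeasurableSpace G] (μ : Measure G) {f g : G → ℝ} {x : G}
    (hx : x ∉ tsupport f * tsupport g) : ∫ y, f y * g (y⁻¹ * x) ∂μ = 0 :=
  integral_eq_zero_of_ae <| ae_of_all _ fun y =>
    mul_eq_zero_of_ne_zero_imp_eq_zero fun hy =>
      image_eq_zero_of_notMem_tsupport fun hyx =>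
        hx ⟨y, subset_tsupport _ hy, y⁻¹ * x, hyx, mul_inv_cancel_left y x⟩

section Convolution

variable {k : ℕ} {G : Type*} [Group G] [TopologicalSpace G] [IsTopologicalGroup G]
  [ChartedSpace (EuclideanSpace ℝ (Fin k)) G]
  [IsManifold (𝓡 k) (⊤ : ℕ∞) G] [T2Space G]
  [MeasurableSpace G] [BorelSpace G] (μ : Measure G) [μ.IsHaarMeasure]

theorem exists_eventually_zero_nhdsSet_pairing_ne_zero (hG : ¬ CompactSpace G)
    (Pi : ↥(testSubmodule k (G := G)) → SmoothMap' k G ℂ → SmoothMap' k G ℂ)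
    (hPi : ∀ γ v x₀, (Pi γ v).1 x₀ = ∫ x, γ.1 x * v.1 (x⁻¹ * x₀) ∂μ)
    {K : Set G} (hK : IsCompact K) :
    ∃ γ₂ u γ, (∀ᶠ x in 𝓝ˢ K, (Pi γ₂ u).1 x = 0) ∧ (Pi γ (Pi γ₂ u)).1 1 ≠ 0 := by
  have : NoncompactSpace G := not_compactSpace_iff.1 hG
  obtain ⟨f₂⟩ : Nonempty (SmoothBumpFunction (𝓡 k) (1 : G)) := inferInstance
  have hS : IsCompact ((tsupport f₂)⁻¹ * K) := f₂.hasCompactSupport.isCompact.inv.mul hK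
  obtain ⟨z, hz⟩ := (ne_univ_iff_exists_notMem _).1 hS.ne_univ
  obtain ⟨fu, -, hfu⟩ := (SmoothBumpFunction.nhds_basis_tsupport (I := 𝓡 k) z).mem_iff.1
    (hS.isClosed.isOpen_compl.mem_nhds hz)
  obtain ⟨f₃⟩ : Nonempty (SmoothBumpFunction (𝓡 k) z⁻¹) := inferInstance
  set h : G → ℝ := fun x => ∫ y, f₂ y * fu (y⁻¹ * x) ∂μ
  have hPi₂ : ∀ x, (Pi f₂.toTestFunction (toSmoothMap k fu.toTestFunction)).1 x = h x :=
    fun x => (hPi _ _ x).trans <| (integral_congr_ae (ae_of_all _ fun y =>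
      (Complex.ofReal_mul (f₂ y) (fu (y⁻¹ * x))).symm)).trans integral_ofReal
  have hz : 0 < h z :=
    integral_mul_pos_of_hasCompactSupport μ f₂.continuous (fu.continuous.comp (by fun_prop))
      f₂.hasCompactSupport (fun _ => f₂.nonneg) (fun _ => fu.nonneg) (x := 1) (by simp)
  -- `h` is continuous because it is the smooth function `Π(γ₂, u)`
  have hcont : Continuous h := by
    simpa [Function.comp_def, hPi₂] using
      Complex.continuous_re.comp (Pi f₂.toTestFunction (toSmoothMap k fu.toTestFunction)).2.1
  refine ⟨f₂.toTestFunction, toSmoothMap k fu.toTestFunction, f₃.toTestFunction, ?_, ?_⟩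
  · have hC : IsCompact (tsupport f₂ * tsupport fu) :=
      f₂.hasCompactSupport.isCompact.mul fu.hasCompactSupport.isCompact
    refine mem_nhdsSet_iff_exists.2 ⟨_, hC.isClosed.isOpen_compl, ?_, fun x hx =>
      (hPi₂ x).trans (by rw [show h x = 0 from integral_mul_comp_eq_zero_of_notMem μ hx,
        Complex.ofReal_zero])⟩
    rintro x hx ⟨a, ha, b, hb, rfl⟩
    exact hfu hb (by simpa using mul_mem_mul (inv_mem_inv.2 ha) hx)
  · have hreal : (Pi f₃.toTestFunction (Pi f₂.toTestFunction (toSmoothMap k fu.toTestFunction))).1 1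
        = ∫ x, f₃ x * h x⁻¹ ∂μ := by
      rw [hPi]
      refine (integral_congr_ae (ae_of_all _ fun x => ?_)).trans integral_ofReal
      simp [hPi₂]
    rw [hreal, Complex.ofReal_ne_zero]
    exact (integral_mul_pos_of_hasCompactSupport μ f₃.continuous (hcont.comp continuous_inv)
      f₃.hasCompactSupport (fun _ => f₃.nonneg)
      (fun _ => integral_nonneg fun _ => mul_nonneg f₂.nonneg fu.nonneg) (x := z⁻¹)
      (by simpa [f₃.eq_one] using hz.ne')).ne'

end Convolution

theorem statement0_general
    {k : ℕ} {G : Type*} [Group G] [TopologicalSpace G] [IsTopologicalGroup G]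
    [ChartedSpace (EuclideanSpace ℝ (Fin k)) G]
    [LieGroup 𝓘(ℝ, EuclideanSpace ℝ (Fin k)) (⊤ : ℕ∞) G]
    [MeasurableSpace G] [BorelSpace G]
    -- `G` is not compact
    (hG : ¬ CompactSpace G)
    -- a left Haar measure on `G`
    (μ : MeasureTheory.Measure G) [μ.IsHaarMeasure]
    -- `E = C^∞(G)` (with the compact-open `C^∞`-topology) is a topological vector
    -- space (true facts about the compact-open `C^∞`-topology):
    [IsTopologicalAddGroup (SmoothMap' k G ℂ)] [ContinuousSMul ℂ (SmoothMap' k G ℂ)]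
    -- the left translation action `π(g,γ)(x) = γ(g⁻¹ x)` of `G` on `E = C^∞(G)`,
    -- a continuous action by continuous linear maps:
    (π : G → SmoothMap' k G ℂ → SmoothMap' k G ℂ)
    (hπ : ∀ (g : G) (γ : SmoothMap' k G ℂ) (x : G), (π g γ).1 x = γ.1 (g⁻¹ * x))
    (hπlin : ∀ g : G, IsLinearMap ℂ (π g))
    -- the LF-topology on `C^∞_c(G)`
    (τTF : TopologicalSpace ↥(testSubmodule k (G := G)))
    (hτTF : IsLeast {t : TopologicalSpace ↥(testSubmodule k (G := G)) |
        @IsTopologicalAddGroup _ t _ ∧ @ContinuousSMul ℂ _ _ _ t ∧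
        @LocallyConvexSpace ℝ _ _ _ _ _ t ∧
        ∀ K : Set G, IsCompact K →
          @Continuous {γ : ↥(testSubmodule k (G := G)) // tsupport (γ.1 : G → ℂ) ⊆ K}
            _ (TopologicalSpace.induced (fun γ => toSmoothMap k γ.1) inferInstance) t
            Subtype.val} τTF)
    -- the action `Π(γ,v) = ∫_G γ(x) π(x,v) dλ_G(x)` of `C^∞_c(G)` on `E = C^∞(G)`,
    -- leaving the space `E^∞` of smooth vectors invariant:
    (Pi : ↥(testSubmodule k (G := G)) → SmoothMap' k G ℂ → SmoothMap' k G ℂ)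
    (hPi : ∀ γ v, IsWeakIntegral μ (fun x : G => γ.1 x • π x v) (Pi γ v))
    (hPimem : ∀ γ v, Pi γ v ∈ smoothVectors k π hπlin) :
    -- `Π : C^∞_c(G) × E → E` is discontinuous ...
    ¬ @Continuous _ _ (@instTopologicalSpaceProd _ _ τTF _) _
        (fun p : ↥(testSubmodule k (G := G)) × SmoothMap' k G ℂ => Pi p.1 p.2) ∧
    -- ... and `Π : C^∞_c(G) × E^∞ → E^∞` is discontinuous (`E^∞` carrying the
    -- initial topology with respect to `Φ : E^∞ → C^∞(G, E)`)
    ¬ @Continuous _ _ (@instTopologicalSpaceProd _ _ τTF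
          (TopologicalSpace.induced (orbitMap k π hπlin) inferInstance))
        (TopologicalSpace.induced (orbitMap k π hπlin) inferInstance)
        (fun p : ↥(testSubmodule k (G := G)) × ↥(smoothVectors k π hπlin) =>
          (⟨Pi p.1 p.2.1, hPimem p.1 p.2.1⟩ : ↥(smoothVectors k π hπlin))) := by
  let _ := τTF
  have : ContinuousSMul ℂ ↥(testSubmodule k (G := G)) := hτTF.1.2.1
  have : T1Space G := ChartedSpace.t1Space (EuclideanSpace ℝ (Fin k)) G
  have hPi_apply := fun γ v => apply_eq_integral_of_isWeakIntegral π hπ (hPi γ v)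
  have hB : ∀ K : Set G, IsCompact K → ∃ γ, ∃ v ∈ smoothVectors k π hπlin,
      (∀ c : ℂ, ∀ᶠ x in 𝓝ˢ K, (c • v).1 x = 0) ∧ (Pi γ v).1 1 ≠ 0 := fun K hK => by
    obtain ⟨γ₂, u, γ, hvan, hne⟩ :=
      exists_eventually_zero_nhdsSet_pairing_ne_zero μ hG Pi hPi_apply hK
    exact ⟨γ, Pi γ₂ u, hPimem γ₂ u, fun c => hvan.mono fun x hx =>
      (congrArg (c * ·) hx).trans (mul_zero c), hne⟩
  constructor
  · intro hcont
    refine not_continuousAt_zero_of_homogeneous (fun s c γ v =>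
      apply_smul_smul_of_eq_integral hPi_apply s c γ v 1) (fun V hV => ?_)
      ((continuous_eval_const_smoothMap' 1).comp hcont).continuousAt
    obtain ⟨K, hK, hKV⟩ := (hasBasis_compactVanishing.comap _).mem_iff.1
      (comap_compactVanishing_le_nhds_zero hV)
    obtain ⟨γ, v, -, hvan, hne⟩ := hB K hK
    exact ⟨γ, v, fun c => hKV (hvan c), hne⟩
  · intro hcont
    let _ : TopologicalSpace ↥(smoothVectors k π hπlin) :=
      .induced (orbitMap k π hπlin) inferInstance
    refine not_continuousAt_zero_of_homogeneous
      (f := fun p : _ × ↥(smoothVectors k π hπlin) => (Pi p.1 p.2.1).1 1)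
      (fun s c γ v => apply_smul_smul_of_eq_integral hPi_apply s c γ v.1 1) (fun V hV => ?_)
      ((continuous_eval_const_smoothMap' 1).comp
        ((continuous_coe_smoothVectors π hπ hπlin).comp hcont)).continuousAt
    rw [nhds_induced, orbitMap_zero] at hV
    obtain ⟨K, hK, hKV⟩ := (hasBasis_compactVanishing.comap _).mem_iff.1
      ((tendsto_orbitMap_compactVanishing π hπ hπlin).le_comap hV)
    obtain ⟨γ, v, hv, hvan, hne⟩ := hB K hK
    exact ⟨γ, ⟨v, hv⟩, fun c => hKV (hvan c), hne⟩

/-- **Proposition A.** Let `G` be a non-compact Lie group and `E := C^∞(G)` with the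
compact-open `C^∞`-topology, made a topological `G`-module via left translation,
`π(g,γ)(x) = γ(g⁻¹x)`.  Then neither `E` nor `E^∞` is a topological
`C^∞_c(G)`-module: both maps `Π : C^∞_c(G) × E → E` and
`Π : C^∞_c(G) × E^∞ → E^∞` are discontinuous. -/
theorem statement0
    {k : ℕ} {G : Type*} [Group G] [TopologicalSpace G] [IsTopologicalGroup G]
    [ChartedSpace (EuclideanSpace ℝ (Fin k)) G]
    [LieGroup 𝓘(ℝ, EuclideanSpace ℝ (Fin k)) (⊤ : ℕ∞) G]
    [LocallyCompactSpace G] [MeasurableSpace G] [BorelSpace G]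
    -- `G` is not compact
    (hG : ¬ CompactSpace G)
    -- a left Haar measure on `G`
    (μ : MeasureTheory.Measure G) [μ.IsHaarMeasure]
    -- `E = C^∞(G)` (with the compact-open `C^∞`-topology) is a topological vector
    -- space (true facts about the compact-open `C^∞`-topology):
    [IsTopologicalAddGroup (SmoothMap' k G ℂ)] [ContinuousSMul ℂ (SmoothMap' k G ℂ)]
    [LocallyConvexSpace ℝ (SmoothMap' k G ℂ)]
    -- the left translation action `π(g,γ)(x) = γ(g⁻¹ x)` of `G` on `E = C^∞(G)`,
    -- a continuous action by continuous linear maps: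
    (π : G → SmoothMap' k G ℂ → SmoothMap' k G ℂ)
    (hπ : ∀ (g : G) (γ : SmoothMap' k G ℂ) (x : G), (π g γ).1 x = γ.1 (g⁻¹ * x))
    (hπlin : ∀ g : G, IsLinearMap ℂ (π g))
    (hπcont : Continuous fun p : G × SmoothMap' k G ℂ => π p.1 p.2)
    (hπone : ∀ γ, π 1 γ = γ)
    (hπmul : ∀ (g h : G) (γ : SmoothMap' k G ℂ), π (g * h) γ = π g (π h γ))
    -- the LF-topology on `C^∞_c(G)`
    (τTF : TopologicalSpace ↥(testSubmodule k (G := G)))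
    (hτTF : IsLeast {t : TopologicalSpace ↥(testSubmodule k (G := G)) |
        @IsTopologicalAddGroup _ t _ ∧ @ContinuousSMul ℂ _ _ _ t ∧
        @LocallyConvexSpace ℝ _ _ _ _ _ t ∧
        ∀ K : Set G, IsCompact K →
          @Continuous {γ : ↥(testSubmodule k (G := G)) // tsupport (γ.1 : G → ℂ) ⊆ K}
            _ (TopologicalSpace.induced (fun γ => toSmoothMap k γ.1) inferInstance) t
            Subtype.val} τTF)
    -- the action `Π(γ,v) = ∫_G γ(x) π(x,v) dλ_G(x)` of `C^∞_c(G)` on `E = C^∞(G)`,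
    -- leaving the space `E^∞` of smooth vectors invariant:
    (Pi : ↥(testSubmodule k (G := G)) → SmoothMap' k G ℂ → SmoothMap' k G ℂ)
    (hPi : ∀ γ v, IsWeakIntegral μ (fun x : G => γ.1 x • π x v) (Pi γ v))
    (hPimem : ∀ γ v, Pi γ v ∈ smoothVectors k π hπlin) :
    -- `Π : C^∞_c(G) × E → E` is discontinuous ...
    ¬ @Continuous _ _ (@instTopologicalSpaceProd _ _ τTF _) _
        (fun p : ↥(testSubmodule k (G := G)) × SmoothMap' k G ℂ => Pi p.1 p.2) ∧
    -- ... and `Π : C^∞_c(G) × E^∞ → E^∞` is discontinuous (`E^∞` carrying the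
    -- initial topology with respect to `Φ : E^∞ → C^∞(G, E)`)
    ¬ @Continuous _ _ (@instTopologicalSpaceProd _ _ τTF
          (TopologicalSpace.induced (orbitMap k π hπlin) inferInstance))
        (TopologicalSpace.induced (orbitMap k π hπlin) inferInstance)
        (fun p : ↥(testSubmodule k (G := G)) × ↥(smoothVectors k π hπlin) =>
          (⟨Pi p.1 p.2.1, hPimem p.1 p.2.1⟩ : ↥(smoothVectors k π hπlin))) :=
  statement0_general hG μ π hπ hπlin τTF hτTF Pi hPi hPimem
end
end

section
/- Let G_1 ⊆ G_2 ⊆ ⋯ be metrizable topological groups such that all inclusion maps G_n → G_{n+1} are continuous homomorphisms, and let O_DL be the direct limit topology on G := ⋃_{n∈ℕ} G_n (a set is open iff its intersection with each G_n is open in G_n). Assume: (a) for each n ∈ ℕ there is m > n such that the set G_n is not open in G_m; (b) there exists n ∈ ℕ such that for all identity neighbourhoods U ⊆ G_n and all m > n, the closure of U in G_m is not compact; (c) there exists a Hausdorff topology 𝒯 on G making each inclusion G_n → G continuous and such that every sequentially compact subset of (G,𝒯) is contained in some G_n and compact there. Then O_DL does not make the group multiplication G × G → G continuous; in particular O_DL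 differs from the topology O_TG making G the direct limit of the G_n in the category of topological groups. -/
/-!
Take `n₀` as in (b) and, by (a), levels `n₀ = N 0 < N 1 < ⋯` such that `G_{N j}` is not open in
`G_{N (j+1)}`; this gives sequences `x_{j,r} → 1` in `G_{N (j+1)}` lying outside `G_{N j}`.
By (b) and (c), the closure in a larger `G_φ` of a neighbourhood of `1` in `G_{n₀}` is not
`𝒯`-sequentially compact, which yields sequences `σ_{j,r}` in the `j`-th basic neighbourhood of `1`
in `G_{n₀}` with no subsequence converging in `G_n` for `n ≤ j`; after passing to a subsequence,
every limit in some `G_n` of a subsequence of `σ_j` is `≠ 1` and is a limit of `σ_j` itself.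

Let `A` consist of the products `σ_{j,r} x_{j,r}` and of these limits. A sequence of products inside
`G_m` only involves `j < m`, since `σ_{j,r} x_{j,r} ∉ G_j`, so its limits are limits of some `σ_j`.
A sequence of limits of `σ_{j_i}` with `j_i → ∞` cannot converge in `G_m`: the `σ_{j_i,r}`, these
limits and their limit would form a `𝒯`-sequentially compact set, hence by (c) a compact subset of
some `G_n`, and `σ_{j_i}` would have a subsequence converging in `G_n` with `n ≤ j_i`. So `A` is
closed for `O_DL` and `1 ∉ A`, while continuity of multiplication would put `1` in the closure of
the products, as `σ_{j,r} → 1` uniformly in `r` and `x_{j,r} → 1`.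
-/

open Filter Set Function Topology TopologicalSpace

theorem Nat.exists_subseq_const_or_strictMono (a : ℕ → ℕ) :
    ∃ φ : ℕ → ℕ, StrictMono φ ∧ ((∃ c, ∀ i, a (φ i) = c) ∨ StrictMono (a ∘ φ)) := by
  by_cases h : ∃ c, ∃ᶠ i in atTop, a i = c
  · obtain ⟨c, hc⟩ := h
    obtain ⟨φ, hφ, hφc⟩ := extraction_of_frequently_atTop hc
    exact ⟨φ, hφ, .inl ⟨c, hφc⟩⟩
  · have hfin : ∀ c, (a ⁻¹' {c}).Finite := fun c =>
      Set.not_infinite.mp fun hinf => h ⟨c, Nat.frequently_atTop_iff_infinite.mpr hinf⟩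
    have ha : Tendsto a atTop atTop := by
      simpa only [Nat.cofinite_eq_atTop] using
        Tendsto.cofinite_of_finite_preimage_singleton fun c => (hfin c).to_subtype
    obtain ⟨φ, hφ, hφa⟩ := strictMono_subseq_of_tendsto_atTop ha
    exact ⟨φ, hφ, .inr hφa⟩

theorem exists_strictMono_chain {P : ℕ → ℕ → Prop} (h : ∀ n, ∃ m, n < m ∧ P n m) (a : ℕ) :
    ∃ N : ℕ → ℕ, N 0 = a ∧ StrictMono N ∧ ∀ j, P (N j) (N (j + 1)) := by
  choose f hf using h
  refine ⟨fun j => f^[j] a, rfl, strictMono_nat_of_lt_succ fun j => ?_, fun j => ?_⟩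
  · simpa only [iterate_succ_apply'] using (hf _).1
  · simpa only [iterate_succ_apply'] using (hf _).2

theorem Filter.HasAntitoneBasis.tendsto_uncurry {X : Type*} {l : Filter X} {B : ℕ → Set X}
    (hB : l.HasAntitoneBasis B) {σ : ℕ → ℕ → X} (hσ : ∀ j r, σ j r ∈ B j) :
    Tendsto (uncurry σ) (atTop ×ˢ ⊤) l := fun _ hU =>
  mem_prod_top.mpr <| (hB.eventually_subset hU).mono fun j hj r => hj (hσ j r)

theorem one_mem_closure_range_uncurry_mul {M : Type*} [Monoid M] [TopologicalSpace M]
    [ContinuousMul M] {a b : ℕ → ℕ → M} (ha : Tendsto (uncurry a) (atTop ×ˢ ⊤) (𝓝 1))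
    (hb : ∀ j, Tendsto (b j) atTop (𝓝 1)) : (1 : M) ∈ closure (range (uncurry (a * b))) := by
  refine mem_closure_iff_nhds.mpr fun U hU => ?_
  obtain ⟨V, hV, hVU⟩ := exists_nhds_one_split hU
  obtain ⟨j, hj⟩ := Filter.nonempty_of_mem (mem_prod_top.mp (ha hV))
  obtain ⟨r, hr⟩ := ((hb j).eventually_mem hV).exists
  exact ⟨_, hVU _ (hj r) _ hr, (j, r), rfl⟩

section TopologicalGroup

variable {L : Type*} [Group L] [TopologicalSpace L] [IsTopologicalGroup L]
  [FirstCountableTopology L]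

theorem Subgroup.exists_seq_notMem_tendsto_one {S : Subgroup L} (hS : ¬ IsOpen (S : Set L)) :
    ∃ x : ℕ → L, (∀ r, x r ∉ S) ∧ Tendsto x atTop (𝓝 1) := by
  have h1 : (1 : L) ∈ _root_.closure (S : Set L)ᶜ := by
    rw [closure_compl, mem_compl_iff, mem_interior_iff_mem_nhds]
    exact fun h => hS (S.isOpen_of_mem_nhds h)
  exact mem_closure_iff_seq_limit.mp h1

theorem exists_seq_mem_tendsto_inv_mul_one {S : Set L} {c : ℕ → L} (hc : ∀ i, c i ∈ closure S) :
    ∃ t : ℕ → L, (∀ i, t i ∈ S) ∧ Tendsto (fun i => (c i)⁻¹ * t i) atTop (𝓝 1) := by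
  obtain ⟨W, hW⟩ := (𝓝 (1 : L)).exists_antitone_basis
  have : ∀ i, ∃ t ∈ S, (c i)⁻¹ * t ∈ W i := fun i => by
    have hnhds : (fun y => (c i)⁻¹ * y) ⁻¹' W i ∈ 𝓝 (c i) :=
      (continuous_const.mul continuous_id).continuousAt.preimage_mem_nhds
        (by simpa using hW.mem i)
    obtain ⟨t, ht, htS⟩ := mem_closure_iff_nhds.mp (hc i) _ hnhds
    exact ⟨t, htS, ht⟩
  choose t htS htW using this
  exact ⟨t, htS, hW.tendsto htW⟩

end TopologicalGroup

theorem Filter.Frequently.exists_subseq_tendsto {X : Type*} [TopologicalSpace X] {P : X → Prop}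
    {T : Set X} {y : ℕ → X} (hy : ∃ᶠ k in atTop, P (y k))
    (h : ∀ y' : ℕ → X, (∀ k, P (y' k)) →
      ∃ a ∈ T, ∃ φ : ℕ → ℕ, StrictMono φ ∧ Tendsto (y' ∘ φ) atTop (𝓝 a)) :
    ∃ a ∈ T, ∃ φ : ℕ → ℕ, StrictMono φ ∧ Tendsto (y ∘ φ) atTop (𝓝 a) := by
  obtain ⟨ψ, hψ, hψP⟩ := extraction_of_frequently_atTop hy
  obtain ⟨a, ha, φ, hφ, hyφ⟩ := h (y ∘ ψ) hψP
  exact ⟨a, ha, ψ ∘ φ, hψ.comp hφ, hyφ⟩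

theorem isSeqCompact_insert_insert_range_union_range {X : Type*} [TopologicalSpace X]
    {z : ℕ → X} {p c : X} {s : ℕ → ℕ → X} (hz : Tendsto z atTop (𝓝 p))
    (hs : ∀ i, Tendsto (s i) atTop (𝓝 (z i))) (hc : Tendsto (uncurry s) (atTop ×ˢ ⊤) (𝓝 c)) :
    IsSeqCompact (insert c (insert p (range z ∪ range (uncurry s)))) := by
  set T := insert c (insert p (range z ∪ range (uncurry s)))
  have of_const : ∀ {a : X}, a ∈ T → ∀ y' : ℕ → X, (∀ k, y' k = a) →
      ∃ a ∈ T, ∃ φ : ℕ → ℕ, StrictMono φ ∧ Tendsto (y' ∘ φ) atTop (𝓝 a) :=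
    fun ha y' hy' => ⟨_, ha, id, strictMono_id, tendsto_const_nhds.congr fun k => (hy' k).symm⟩
  intro y hy
  have hfreq : ∃ᶠ k in atTop, y k = c ∨ y k = p ∨ y k ∈ range z ∨ y k ∈ range (uncurry s) :=
    Frequently.of_forall fun k => by simpa only [T, mem_insert_iff, mem_union] using hy k
  simp only [frequently_or_distrib] at hfreq
  rcases hfreq with hk | hk | hk | hk
  · exact hk.exists_subseq_tendsto (P := (· = c)) (of_const (mem_insert c _))
  · exact hk.exists_subseq_tendsto (P := (· = p)) (of_const (mem_insert_of_mem c (mem_insert p _)))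
  · refine hk.exists_subseq_tendsto fun y' hy' => ?_
    choose a ha using hy'
    obtain ⟨φ, hφ, ⟨i, hi⟩ | hm⟩ := Nat.exists_subseq_const_or_strictMono a
    · exact ⟨z i, by simp [T], φ, hφ, tendsto_const_nhds.congr fun k => by simp [← ha, hi]⟩
    · exact ⟨p, by simp [T], φ, hφ, (hz.comp hm.tendsto_atTop).congr fun k => by simp [← ha]⟩
  · refine hk.exists_subseq_tendsto fun y' hy' => ?_
    have : ∀ k, ∃ i r, s i r = y' k := fun k => by
      obtain ⟨⟨i, r⟩, h⟩ := hy' k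
      exact ⟨i, r, h⟩
    choose a b hab using this
    obtain ⟨φ, hφ, ⟨i, hi⟩ | hm⟩ := Nat.exists_subseq_const_or_strictMono a
    · obtain ⟨ψ, hψ, ⟨r, hr⟩ | hm'⟩ := Nat.exists_subseq_const_or_strictMono (b ∘ φ)
      · refine ⟨s i r, by simp [T], φ ∘ ψ, hφ.comp hψ, tendsto_const_nhds.congr fun k => ?_⟩
        simp [← hab, ← hi (ψ k), ← hr k]
      · refine ⟨z i, by simp [T], φ ∘ ψ, hφ.comp hψ,
          ((hs i).comp hm'.tendsto_atTop).congr fun k => ?_⟩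
        simp [← hab, ← hi (ψ k)]
    · have hab' : Tendsto (fun k => (a (φ k), b (φ k))) atTop (atTop ×ˢ ⊤) :=
        hm.tendsto_atTop.prodMk tendsto_top
      refine ⟨c, mem_insert c _, φ, hφ, (hc.comp hab').congr fun k => ?_⟩
      simp [← hab]

section LevelConvergence

variable {G : Type*} [Group G]

def TendstoIn (K : Subgroup G) [TopologicalSpace K] (v : ℕ → G) (g : G) : Prop :=
  ∃ (s : ℕ → K) (a : K), Tendsto s atTop (𝓝 a) ∧ (fun i => (s i : G)) = v ∧ (a : G) = g

variable {K L : Subgroup G} [TopologicalSpace K] [TopologicalSpace L] {v w : ℕ → G} {g h : G}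

theorem Filter.Tendsto.tendstoIn {s : ℕ → K} {a : K} (hs : Tendsto s atTop (𝓝 a)) :
    TendstoIn K (fun i => (s i : G)) a :=
  ⟨s, a, hs, rfl, rfl⟩

namespace TendstoIn

theorem comp (hv : TendstoIn K v g) {ψ : ℕ → ℕ} (hψ : Tendsto ψ atTop atTop) :
    TendstoIn K (v ∘ ψ) g := by
  obtain ⟨s, a, hs, rfl, rfl⟩ := hv
  exact (hs.comp hψ).tendstoIn

theorem mono (hv : TendstoIn K v g) (hKL : K ≤ L) (hc : Continuous (Subgroup.inclusion hKL)) :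
    TendstoIn L v g := by
  obtain ⟨s, a, hs, rfl, rfl⟩ := hv
  exact ((hc.tendsto a).comp hs).tendstoIn

theorem mul [IsTopologicalGroup K] (hv : TendstoIn K v g) (hw : TendstoIn K w h) :
    TendstoIn K (v * w) (g * h) := by
  obtain ⟨s, a, hs, rfl, rfl⟩ := hv
  obtain ⟨t, b, ht, rfl, rfl⟩ := hw
  exact (hs.mul ht).tendstoIn

theorem inv [IsTopologicalGroup K] (hv : TendstoIn K v g) : TendstoIn K v⁻¹ g⁻¹ := by
  obtain ⟨s, a, hs, rfl, rfl⟩ := hv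
  exact hs.inv.tendstoIn

theorem tendsto [TopologicalSpace G] (hv : TendstoIn K v g) (hK : Continuous ((↑) : K → G)) :
    Tendsto v atTop (𝓝 g) := by
  obtain ⟨s, a, hs, rfl, rfl⟩ := hv
  exact (hK.tendsto a).comp hs

theorem mem_image_of_isClosed {C : Set K} (hC : IsClosed C) {c : ℕ → K} (hcC : ∀ i, c i ∈ C)
    (h : TendstoIn K (fun i => (c i : G)) g) : g ∈ ((↑) '' C : Set G) := by
  obtain ⟨s, a, hs, hsc, rfl⟩ := h
  obtain rfl : s = c := funext fun i => Subtype.ext (congrFun hsc i)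
  exact ⟨a, hC.mem_of_tendsto hs (.of_forall hcC), rfl⟩

end TendstoIn

end LevelConvergence

section DirectSystem

variable {G : Type*} [Group G] {H : ℕ → Subgroup G} [∀ n, TopologicalSpace (H n)]

theorem continuous_inclusion_of_le (hmono : Monotone H)
    (hincl : ∀ n, Continuous (Subgroup.inclusion (hmono (Nat.le_succ n)))) {n m : ℕ} (h : n ≤ m) :
    Continuous (Subgroup.inclusion (hmono h)) := by
  induction m, h using Nat.le_induction with
  | base => exact continuous_id
  | succ k hk ih => exact (hincl k).comp ih

-- The sequences `σ_j` of the sketch above.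
variable (H) in
structure IsWildSeq (j : ℕ) (w : ℕ → G) : Prop where
  lt_and_ne_one : ∀ {n ψ g}, StrictMono ψ → TendstoIn (H n) (w ∘ ψ) g → j < n ∧ g ≠ 1
  exists_tendstoIn : ∀ {n ψ g}, StrictMono ψ → TendstoIn (H n) (w ∘ ψ) g →
    ∃ n', TendstoIn (H n') w g

variable (H) in
def levelLimits (σ : ℕ → ℕ → G) : Set G := {g | ∃ j n, TendstoIn (H n) (σ j) g}

variable [TopologicalSpace G]

theorem exists_isWildSeq_comp [T2Space G] (hval : ∀ n, Continuous ((↑) : H n → G))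
    {j : ℕ} {v : ℕ → G}
    (hv : ∀ {n ψ g}, StrictMono ψ → TendstoIn (H n) (v ∘ ψ) g → j < n ∧ g ≠ 1) :
    ∃ ψ₀ : ℕ → ℕ, StrictMono ψ₀ ∧ IsWildSeq H j (v ∘ ψ₀) := by
  by_cases hconv : ∃ n g ψ, StrictMono ψ ∧ TendstoIn (H n) (v ∘ ψ) g
  · obtain ⟨N, g₀, ψ₀, hψ₀, hg₀⟩ := hconv
    refine ⟨ψ₀, hψ₀, ⟨fun hψ h => hv (hψ₀.comp hψ) h, fun {n ψ g} hψ h => ⟨N, ?_⟩⟩⟩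
    obtain rfl : g = g₀ :=
      tendsto_nhds_unique (h.tendsto (hval n)) ((hg₀.comp hψ.tendsto_atTop).tendsto (hval N))
    exact hg₀
  · push Not at hconv
    exact ⟨id, strictMono_id, ⟨fun hψ h => hv hψ h, fun {n ψ g} hψ h => (hconv n g ψ hψ h).elim⟩⟩

variable [∀ n, T2Space (H n)] (hmono : Monotone H)

theorem not_isSeqCompact_image_closure
    (hincl : ∀ {n m} (h : n ≤ m), Continuous (Subgroup.inclusion (hmono h)))
    (hK : ∀ K : Set G, IsSeqCompact K → ∃ n, K ⊆ H n ∧ IsCompact ((↑) ⁻¹' K : Set (H n)))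
    {nb : ℕ} (hnb : ∀ U ∈ 𝓝 (1 : H nb), ∀ m (hm : nb < m),
      ¬ IsCompact (closure (Subgroup.inclusion (hmono hm.le) '' U)))
    {φ : ℕ} (hφ : nb < φ) {B : Set (H nb)} (hB : B ∈ 𝓝 1) :
    ¬ IsSeqCompact ((↑) '' closure (Subgroup.inclusion (hmono hφ.le) '' B) : Set G) := by
  intro hseq
  obtain ⟨n, hsub, hcpt⟩ := hK _ hseq
  have hcpt' := hcpt.image (hincl (le_max_left n φ))
  refine hnb B hB (max n φ) (hφ.trans_le (le_max_right n φ))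
    (hcpt'.of_isClosed_subset isClosed_closure (closure_minimal ?_ hcpt'.isClosed))
  rintro _ ⟨b, hb, rfl⟩
  have hbK : (b : G) ∈ ((↑) '' closure (Subgroup.inclusion (hmono hφ.le) '' B) : Set G) :=
    ⟨_, subset_closure ⟨b, hb, rfl⟩, rfl⟩
  exact ⟨⟨b, hsub hbK⟩, hbK, rfl⟩

theorem exists_seq_mem_forall_tendstoIn [∀ n, IsTopologicalGroup (H n)]
    [∀ n, FirstCountableTopology (H n)]
    (hincl : ∀ {n m} (h : n ≤ m), Continuous (Subgroup.inclusion (hmono h)))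
    (hval : ∀ n, Continuous ((↑) : H n → G))
    (hK : ∀ K : Set G, IsSeqCompact K → ∃ n, K ⊆ H n ∧ IsCompact ((↑) ⁻¹' K : Set (H n)))
    {nb : ℕ} (hnb : ∀ U ∈ 𝓝 (1 : H nb), ∀ m (hm : nb < m),
      ¬ IsCompact (closure (Subgroup.inclusion (hmono hm.le) '' U)))
    {B : Set (H nb)} (hB : B ∈ 𝓝 1) (j : ℕ) :
    ∃ v : ℕ → H nb, (∀ r, v r ∈ B) ∧ ∀ {n ψ g}, StrictMono ψ →
      TendstoIn (H n) ((fun r => (v r : G)) ∘ ψ) g → j < n ∧ g ≠ 1 := by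
  set φ := max j (nb + 1)
  have hφ : nb < φ := Nat.lt_of_lt_of_le (Nat.lt_succ_self nb) (le_max_right _ _)
  set C := closure (Subgroup.inclusion (hmono hφ.le) '' B)
  have hC := not_isSeqCompact_image_closure hmono hincl hK hnb hφ hB
  simp only [IsSeqCompact, not_forall, not_exists, not_and, exists_prop] at hC
  obtain ⟨u, hu, hwild⟩ := hC
  choose c hcC hcu using hu
  obtain rfl : u = fun i => (c i : G) := funext fun i => (hcu i).symm
  obtain ⟨t, htB, ht⟩ := exists_seq_mem_tendsto_inv_mul_one hcC
  choose b hbB hbt using htB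
  refine ⟨b, hbB, fun {n ψ g} hψ hg => ?_⟩
  -- `c = b * ε⁻¹` where `ε = c⁻¹ * b → 1` in `H φ`, so `c ∘ ψ` has the same limits as `b ∘ ψ`
  have hlim : TendstoIn (H (max n φ)) ((fun i => (c i : G)) ∘ ψ) g := by
    have h₁ := hg.mono _ (hincl (le_max_left n φ))
    have h₂ := ((ht.comp hψ.tendsto_atTop).tendstoIn.mono _ (hincl (le_max_right n φ))).inv
    convert h₁.mul h₂ using 1
    · funext i
      simp [← hbt]
    · simp
  have hgC : g ∉ ((↑) '' C : Set G) := fun hgC => hwild g hgC ψ hψ (hlim.tendsto (hval _))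
  refine ⟨?_, ?_⟩
  · by_contra! hnj
    rw [max_eq_right (hnj.trans (le_max_left _ _))] at hlim
    exact hgC (hlim.mem_image_of_isClosed isClosed_closure fun i => hcC (ψ i))
  · rintro rfl
    exact hgC ⟨1, subset_closure ⟨1, mem_of_mem_nhds hB, map_one _⟩, rfl⟩

theorem exists_isWildSeq_family [T2Space G] [∀ n, IsTopologicalGroup (H n)]
    [∀ n, FirstCountableTopology (H n)]
    (hincl : ∀ {n m} (h : n ≤ m), Continuous (Subgroup.inclusion (hmono h)))
    (hval : ∀ n, Continuous ((↑) : H n → G))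
    (hK : ∀ K : Set G, IsSeqCompact K → ∃ n, K ⊆ H n ∧ IsCompact ((↑) ⁻¹' K : Set (H n)))
    {nb : ℕ} (hnb : ∀ U ∈ 𝓝 (1 : H nb), ∀ m (hm : nb < m),
      ¬ IsCompact (closure (Subgroup.inclusion (hmono hm.le) '' U))) :
    ∃ σ : ℕ → ℕ → H nb, Tendsto (uncurry σ) (atTop ×ˢ ⊤) (𝓝 1) ∧
      ∀ j, IsWildSeq H j fun r => (σ j r : G) := by
  obtain ⟨B, hB⟩ := (𝓝 (1 : H nb)).exists_antitone_basis
  have : ∀ j, ∃ σ : ℕ → H nb, (∀ r, σ r ∈ B j) ∧ IsWildSeq H j fun r => (σ r : G) := fun j => by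
    obtain ⟨v, hvB, hv⟩ := exists_seq_mem_forall_tendstoIn hmono hincl hval hK hnb (hB.mem j) j
    obtain ⟨ψ, -, hψ⟩ := exists_isWildSeq_comp hval hv
    exact ⟨v ∘ ψ, fun r => hvB _, hψ⟩
  choose σ hσB hσ using this
  exact ⟨σ, hB.tendsto_uncurry hσB, hσ⟩

end DirectSystem

section ClosedSet

variable {G : Type*} [Group G] {H : ℕ → Subgroup G} [∀ n, TopologicalSpace (H n)]
  {σ x : ℕ → ℕ → G}

theorem one_notMem_range_mul_union_levelLimits (hσ : ∀ j, IsWildSeq H j (σ j))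
    (hesc : ∀ j r, σ j r * x j r ∉ H j) : (1 : G) ∉ range (uncurry (σ * x)) ∪ levelLimits H σ := by
  rintro (⟨⟨j, r⟩, h⟩ | ⟨j, n, h⟩)
  · exact hesc j r ((show σ j r * x j r = 1 from h) ▸ one_mem _)
  · exact ((hσ j).lt_and_ne_one strictMono_id h).2 rfl

variable [TopologicalSpace G] [T2Space G]

theorem mem_range_mul_union_levelLimits_of_tendsto (hmono : Monotone H)
    (hincl : ∀ {n m} (h : n ≤ m), Continuous (Subgroup.inclusion (hmono h)))
    [∀ n, IsTopologicalGroup (H n)] (hval : ∀ n, Continuous ((↑) : H n → G))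
    (hσ : ∀ j, IsWildSeq H j (σ j)) (hx : ∀ j, ∃ n, TendstoIn (H n) (x j) 1)
    (hesc : ∀ j r, σ j r * x j r ∉ H j) {m : ℕ} {f : ℕ → H m} {p : H m}
    (hfp : Tendsto f atTop (𝓝 p)) (hf : ∀ i, (f i : G) ∈ range (uncurry (σ * x))) :
    (p : G) ∈ range (uncurry (σ * x)) ∪ levelLimits H σ := by
  have : ∀ i, ∃ j r, σ j r * x j r = f i := fun i => by
    obtain ⟨⟨j, r⟩, h⟩ := hf i
    exact ⟨j, r, h⟩
  choose j r hjr using this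
  have hjm : ∀ i, j i < m := fun i => by
    by_contra! h
    exact hesc _ _ (hjr i ▸ hmono h (f i).2)
  obtain ⟨φ, hφ, hj⟩ := Nat.exists_subseq_const_or_strictMono j
  obtain ⟨j₀, hj₀⟩ : ∃ j₀, ∀ i, j (φ i) = j₀ :=
    hj.resolve_right fun h => (hjm (φ m)).not_ge (h.le_apply)
  obtain ⟨ψ, hψ, ⟨r₀, hr₀⟩ | hr⟩ := Nat.exists_subseq_const_or_strictMono (r ∘ φ)
  · have hfp' := ((hval m).tendsto p).comp (hfp.comp (hφ.comp hψ).tendsto_atTop)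
    refine .inl ⟨(j₀, r₀), tendsto_nhds_unique tendsto_const_nhds (hfp'.congr fun i => ?_)⟩
    simp [← hjr, hj₀, ← hr₀ i]
  · obtain ⟨n, hn⟩ := hx j₀
    have h₁ := (hfp.comp (hφ.comp hψ).tendsto_atTop).tendstoIn.mono _ (hincl (le_max_left m n))
    have h₂ := ((hn.comp hr.tendsto_atTop).mono _ (hincl (le_max_right m n))).inv
    have h₃ : TendstoIn (H (max m n)) (σ j₀ ∘ (r ∘ φ ∘ ψ)) p := by
      convert h₁.mul h₂ using 1
      · funext i
        simp [← hjr, hj₀]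
      · simp
    exact .inr ⟨j₀, (hσ j₀).exists_tendstoIn hr h₃⟩

theorem mem_levelLimits_of_tendsto [∀ n, FirstCountableTopology (H n)]
    (hval : ∀ n, Continuous ((↑) : H n → G))
    (hK : ∀ K : Set G, IsSeqCompact K → ∃ n, K ⊆ H n ∧ IsCompact ((↑) ⁻¹' K : Set (H n)))
    (hσ₁ : Tendsto (uncurry σ) (atTop ×ˢ ⊤) (𝓝 1)) (hσ : ∀ j, IsWildSeq H j (σ j))
    {m : ℕ} {f : ℕ → H m} {p : H m} (hfp : Tendsto f atTop (𝓝 p))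
    (hf : ∀ i, (f i : G) ∈ levelLimits H σ) : (p : G) ∈ levelLimits H σ := by
  choose l n hl using hf
  have hfp' := ((hval m).tendsto p).comp hfp
  obtain ⟨φ, hφ, ⟨j, hj⟩ | hL⟩ := Nat.exists_subseq_const_or_strictMono l
  · have hconst : ∀ i, (f (φ i) : G) = f (φ 0) := fun i => by
      have h₀ := hl (φ 0)
      have hi := hl (φ i)
      rw [hj] at h₀ hi
      exact tendsto_nhds_unique (hi.tendsto (hval _)) (h₀.tendsto (hval _))
    have hp : (p : G) = f (φ 0) := tendsto_nhds_unique (hfp'.comp hφ.tendsto_atTop)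
      (tendsto_const_nhds.congr fun i => (hconst i).symm)
    exact hp ▸ ⟨_, _, hl (φ 0)⟩
  · exfalso
    set T := insert 1 (insert (p : G) (range (fun i => (f (φ i) : G)) ∪
      range (uncurry fun i => σ (l (φ i)))))
    have hT : IsSeqCompact T := isSeqCompact_insert_insert_range_union_range
      (hfp'.comp hφ.tendsto_atTop) (fun i => (hl (φ i)).tendsto (hval _))
      (hσ₁.comp (hL.tendsto_atTop.prodMap tendsto_id))
    obtain ⟨k, hTk, hcpt⟩ := hK T hT
    have hmem : ∀ r, σ (l (φ k)) r ∈ T := fun r =>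
      mem_insert_of_mem _ (mem_insert_of_mem _ (.inr ⟨(k, r), rfl⟩))
    obtain ⟨a, -, ψ, hψ, ha⟩ :=
      hcpt.isSeqCompact (x := fun r => ⟨σ (l (φ k)) r, hTk (hmem r)⟩) hmem
    exact ((hσ _).lt_and_ne_one hψ ha.tendstoIn).1.not_ge hL.le_apply

theorem isClosed_preimage_range_mul_union_levelLimits (hmono : Monotone H)
    (hincl : ∀ {n m} (h : n ≤ m), Continuous (Subgroup.inclusion (hmono h)))
    [∀ n, IsTopologicalGroup (H n)] [∀ n, FirstCountableTopology (H n)]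
    (hval : ∀ n, Continuous ((↑) : H n → G))
    (hK : ∀ K : Set G, IsSeqCompact K → ∃ n, K ⊆ H n ∧ IsCompact ((↑) ⁻¹' K : Set (H n)))
    (hσ₁ : Tendsto (uncurry σ) (atTop ×ˢ ⊤) (𝓝 1)) (hσ : ∀ j, IsWildSeq H j (σ j))
    (hx : ∀ j, ∃ n, TendstoIn (H n) (x j) 1) (hesc : ∀ j r, σ j r * x j r ∉ H j) (m : ℕ) :
    IsClosed ((↑) ⁻¹' (range (uncurry (σ * x)) ∪ levelLimits H σ) : Set (H m)) := by
  refine IsSeqClosed.isClosed fun f p hf hfp => ?_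
  by_cases hD : ∃ᶠ i in atTop, (f i : G) ∈ levelLimits H σ
  · obtain ⟨φ, hφ, hφD⟩ := extraction_of_frequently_atTop hD
    exact .inr (mem_levelLimits_of_tendsto hval hK hσ₁ hσ (hfp.comp hφ.tendsto_atTop) hφD)
  · obtain ⟨φ, hφ, hφS⟩ := extraction_of_eventually_atTop
      ((not_frequently.mp hD).mono fun i hi => (hf i).resolve_right hi)
    exact mem_range_mul_union_levelLimits_of_tendsto hmono hincl hval hσ hx hesc
      (hfp.comp hφ.tendsto_atTop) hφS

end ClosedSet

theorem exists_seqs_mul_mem_closed_one_notMem {G : Type*} [Group G] {H : ℕ → Subgroup G}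
    [∀ n, TopologicalSpace (H n)] [∀ n, IsTopologicalGroup (H n)] [∀ n, MetrizableSpace (H n)]
    (hmono : Monotone H) (hincl : ∀ {n m} (h : n ≤ m), Continuous (Subgroup.inclusion (hmono h)))
    (ha : ∀ n, ∃ m, n < m ∧ ¬ IsOpen {x : H m | (x : G) ∈ H n})
    {nb : ℕ} (hnb : ∀ U ∈ 𝓝 (1 : H nb), ∀ m (hm : nb < m),
      ¬ IsCompact (closure (Subgroup.inclusion (hmono hm.le) '' U)))
    (hc : ∃ 𝒯 : TopologicalSpace G, @T2Space G 𝒯 ∧ (∀ n, Continuous[_, 𝒯] ((↑) : H n → G)) ∧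
      ∀ K : Set G, @IsSeqCompact G 𝒯 K → ∃ n, K ⊆ H n ∧ IsCompact ((↑) ⁻¹' K : Set (H n))) :
    ∃ (σ : ℕ → ℕ → H nb) (M : ℕ → ℕ) (x : ∀ j, ℕ → H (M j)) (A : Set G),
      Tendsto (uncurry σ) (atTop ×ˢ ⊤) (𝓝 1) ∧ (∀ j, Tendsto (x j) atTop (𝓝 1)) ∧
      (∀ j r, (σ j r : G) * x j r ∈ A) ∧ (1 : G) ∉ A ∧ ∀ m, IsClosed ((↑) ⁻¹' A : Set (H m)) := by
  obtain ⟨𝒯, h𝒯, hval, hK⟩ := hc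
  obtain ⟨N, rfl, hN, hNopen⟩ := exists_strictMono_chain ha nb
  choose x hxH hx using fun j => Subgroup.exists_seq_notMem_tendsto_one
    (S := (H (N j)).subgroupOf (H (N (j + 1)))) (hNopen j)
  obtain ⟨σ, hσ₁, hσ⟩ := exists_isWildSeq_family hmono hincl hval hK hnb
  have hesc : ∀ j r, (σ j r : G) * x j r ∉ H j := fun j r h =>
    hxH j r <| (Subgroup.mul_mem_cancel_left _ (hmono (hN.monotone (Nat.zero_le j)) (σ j r).2)).mp
      (hmono hN.le_apply h)
  refine ⟨σ, _, x, _, hσ₁, hx, fun j r => .inl ⟨(j, r), rfl⟩,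
    one_notMem_range_mul_union_levelLimits hσ hesc,
    isClosed_preimage_range_mul_union_levelLimits (σ := fun j r => (σ j r : G))
      (x := fun j r => (x j r : G)) hmono hincl hval hK (((hval _).tendsto 1).comp hσ₁) hσ
      (fun j => ⟨_, (hx j).tendstoIn⟩) hesc⟩

theorem statement5_general
    (G : Type*) [Group G]
    -- the ascending sequence of subgroups, exhausting G
    (H : ℕ → Subgroup G) (hmono : Monotone H)
    -- topologies making each step a metrizable topological group
    (τ : (n : ℕ) → TopologicalSpace (H n))
    (htg : ∀ n, @IsTopologicalGroup (H n) (τ n) _)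
    (hmet : ∀ n, @TopologicalSpace.MetrizableSpace (H n) (τ n))
    -- continuity of the inclusion maps Gₙ → Gₙ₊₁
    (hincl : ∀ n, @Continuous (H n) (H (n + 1)) (τ n) (τ (n + 1))
      (Subgroup.inclusion (hmono (Nat.le_succ n))))
    -- the direct limit topology O_DL on G (final topology for the inclusions)
    (ODL : TopologicalSpace G)
    (hODL : ODL = ⨆ n, TopologicalSpace.coinduced (fun x : H n => (x : G)) (τ n))
    -- the finest group topology on G making all inclusions continuous
    (OTG : TopologicalSpace G)
    (hOTG : OTG = (sInf {t : GroupTopology G |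
      ∀ n, @Continuous (H n) G (τ n) t.toTopologicalSpace Subtype.val}).toTopologicalSpace)
    -- hypothesis (a)
    (ha : ∀ n, ∃ m, n < m ∧ ¬ @IsOpen (H m) (τ m) {x : H m | (x : G) ∈ H n})
    -- hypothesis (b)
    (hb : ∃ n, ∀ U : Set (H n), U ∈ @nhds (H n) (τ n) 1 → ∀ m, (hnm : n < m) →
      ¬ @IsCompact (H m) (τ m) (@closure (H m) (τ m)
        ((Subgroup.inclusion (hmono hnm.le)) '' U)))
    -- hypothesis (c)
    (hc : ∃ 𝒯 : TopologicalSpace G, @T2Space G 𝒯 ∧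
      (∀ n, @Continuous (H n) G (τ n) 𝒯 Subtype.val) ∧
      (∀ K : Set G, @IsSeqCompact G 𝒯 K →
        ∃ n, K ⊆ (H n : Set G) ∧ @IsCompact (H n) (τ n) (Subtype.val ⁻¹' K))) :
    ¬ @Continuous (G × G) G (@instTopologicalSpaceProd G G ODL ODL) ODL
        (fun p => p.1 * p.2)
    ∧ ODL ≠ OTG := by
  let _ : ∀ n, TopologicalSpace (H n) := τ
  have _ : ∀ n, IsTopologicalGroup (H n) := htg
  have _ : ∀ n, MetrizableSpace (H n) := hmet
  subst hOTG
  refine (and_iff_left_of_imp fun hmul hEq => ?_).mpr fun hmul => ?_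
  · rw [hEq] at hmul
    exact hmul (GroupTopology.continuous_mul' _)
  obtain ⟨nb, hnb⟩ := hb
  obtain ⟨σ, M, x, A, hσ, hx, hA, h1A, hAcl⟩ := exists_seqs_mul_mem_closed_one_notMem hmono
    (continuous_inclusion_of_le hmono hincl) ha hnb hc
  have : ContinuousMul G := ⟨hmul⟩
  have hval (n : ℕ) : Continuous ((↑) : H n → G) := by
    rw [hODL]
    exact continuous_iff_coinduced_le.mpr (le_iSup (fun k => coinduced ((↑) : H k → G) (τ k)) n)
  have hAclosed : IsClosed A := by
    rw [hODL]
    exact isClosed_iSup_iff.mpr fun m => isClosed_coinduced.mpr (hAcl m)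
  have h1 := one_mem_closure_range_uncurry_mul (a := fun j r => (σ j r : G))
    (b := fun j r => (x j r : G)) (((hval _).tendsto 1).comp hσ) fun j =>
      ((hval _).tendsto 1).comp (hx j)
  exact h1A (hAclosed.closure_subset
    (closure_mono (range_subset_iff.mpr fun q : ℕ × ℕ => hA q.1 q.2) h1))

/-- **Proposition (variant of Yamasaki's theorem).**
Let `G₁ ⊆ G₂ ⊆ ⋯` be metrizable topological groups with continuous inclusion
homomorphisms, and let `O_DL` be the direct limit topology on the union `G`.
Assume (a) for each `n` there is `m > n` such that `Gₙ` is not open in `Gₘ`;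
(b) there is `n` such that for all identity neighbourhoods `U ⊆ Gₙ` and all `m > n`
the closure of `U` in `Gₘ` is not compact; and (c) there is a Hausdorff topology `𝒯`
on `G` making each inclusion `Gₙ → G` continuous such that every sequentially compact
subset of `(G,𝒯)` is contained in some `Gₙ` and compact there.
Then `O_DL` does not make multiplication `G × G → G` continuous, and in particular
`O_DL` differs from the topology `O_TG` making `G` the direct limit of the `Gₙ`
as a topological group (the finest group topology making all inclusions continuous). -/
theorem statement5
    (G : Type*) [Group G]
    -- the ascending sequence of subgroups, exhausting G
    (H : ℕ → Subgroup G) (hmono : Monotone H) (hexh : ∀ x : G, ∃ n, x ∈ H n)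
    -- topologies making each step a metrizable topological group
    (τ : (n : ℕ) → TopologicalSpace (H n))
    (htg : ∀ n, @IsTopologicalGroup (H n) (τ n) _)
    (hmet : ∀ n, @TopologicalSpace.MetrizableSpace (H n) (τ n))
    -- continuity of the inclusion maps Gₙ → Gₙ₊₁
    (hincl : ∀ n, @Continuous (H n) (H (n + 1)) (τ n) (τ (n + 1))
      (Subgroup.inclusion (hmono (Nat.le_succ n))))
    -- the direct limit topology O_DL on G (final topology for the inclusions)
    (ODL : TopologicalSpace G)
    (hODL : ODL = ⨆ n, TopologicalSpace.coinduced (fun x : H n => (x : G)) (τ n))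
    -- the finest group topology on G making all inclusions continuous
    (OTG : TopologicalSpace G)
    (hOTG : OTG = (sInf {t : GroupTopology G |
      ∀ n, @Continuous (H n) G (τ n) t.toTopologicalSpace Subtype.val}).toTopologicalSpace)
    -- hypothesis (a)
    (ha : ∀ n, ∃ m, n < m ∧ ¬ @IsOpen (H m) (τ m) {x : H m | (x : G) ∈ H n})
    -- hypothesis (b)
    (hb : ∃ n, ∀ U : Set (H n), U ∈ @nhds (H n) (τ n) 1 → ∀ m, (hnm : n < m) →
      ¬ @IsCompact (H m) (τ m) (@closure (H m) (τ m)
        ((Subgroup.inclusion (hmono hnm.le)) '' U)))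
    -- hypothesis (c)
    (hc : ∃ 𝒯 : TopologicalSpace G, @T2Space G 𝒯 ∧
      (∀ n, @Continuous (H n) G (τ n) 𝒯 Subtype.val) ∧
      (∀ K : Set G, @IsSeqCompact G 𝒯 K →
        ∃ n, K ⊆ (H n : Set G) ∧ @IsCompact (H n) (τ n) (Subtype.val ⁻¹' K))) :
    ¬ @Continuous (G × G) G (@instTopologicalSpaceProd G G ODL ODL) ODL
        (fun p => p.1 * p.2)
    ∧ ODL ≠ OTG :=
  statement5_general G H hmono τ htg hmet hincl ODL hODL OTG hOTG ha hb hc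
end

section
/- Let G be a connected Lie group with G ⊆ G_ℂ and V_n a relatively compact open identity neighbourhood in G_ℂ. If K ⊆ GV_n is compact, then there exists a compact set L ⊆ V_n such that GK ⊆ GL. -/
open scoped Pointwise
open Set

/- The sets `S * interior L`, for compact `L ⊆ V`, form a directed open cover of `S * V`
(by local compactness), so the compact set `K` lies in a single one of them. -/
theorem IsCompact.exists_isCompact_subset_of_subset_mul {G : Type*} [Group G]
    [TopologicalSpace G] [ContinuousConstSMul G G] [LocallyCompactSpace G]
    {S V K : Set G} (hV : IsOpen V) (hK : IsCompact K) (hKSV : K ⊆ S * V) :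
    ∃ L, L ⊆ V ∧ IsCompact L ∧ K ⊆ S * L := by
  let ι := {L : Set G // L ⊆ V ∧ IsCompact L}
  have : Nonempty ι := ⟨⟨∅, empty_subset V, isCompact_empty⟩⟩
  have cover : K ⊆ ⋃ L : ι, S * interior L.1 := by
    rintro _ hx
    obtain ⟨s, hs, v, hv, rfl⟩ := hKSV hx
    obtain ⟨L, hL, hvL, hLV⟩ := exists_compact_subset hV hv
    exact mem_iUnion.2 ⟨⟨L, hLV, hL⟩, mul_mem_mul hs hvL⟩
  have directed : Directed (· ⊆ ·) fun L : ι => S * interior L.1 := by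
    rintro ⟨L₁, hL₁V, hL₁⟩ ⟨L₂, hL₂V, hL₂⟩
    exact ⟨⟨L₁ ∪ L₂, union_subset hL₁V hL₂V, hL₁.union hL₂⟩,
      mul_subset_mul_left (interior_mono subset_union_left),
      mul_subset_mul_left (interior_mono subset_union_right)⟩
  obtain ⟨⟨L, hLV, hL⟩, hKL⟩ :=
    hK.elim_directed_cover _ (fun _ => isOpen_interior.mul_left) cover directed
  exact ⟨L, hLV, hL, hKL.trans (mul_subset_mul_left interior_subset)⟩

theorem statement11_general
    (Gc : Type*) [Group Gc] [TopologicalSpace Gc] [IsTopologicalGroup Gc]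
    [LocallyCompactSpace Gc]
    (H : Subgroup Gc)
    (Vn : Set Gc) (hVopen : IsOpen Vn)
    (K : Set Gc) (hK : IsCompact K) (hKsub : K ⊆ (H : Set Gc) * Vn) :
    ∃ L : Set Gc, L ⊆ Vn ∧ IsCompact L ∧ (H : Set Gc) * K ⊆ (H : Set Gc) * L := by
  obtain ⟨L, hLV, hL, hKL⟩ := hK.exists_isCompact_subset_of_subset_mul hVopen hKsub
  refine ⟨L, hLV, hL, ?_⟩
  calc (H : Set Gc) * K ⊆ H * (H * L) := mul_subset_mul_left hKL
    _ = H * L := by rw [← mul_assoc, coe_mul_coe]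

/-- **Lemma.** Let `G` be a connected Lie group contained in its complexification
`G_ℂ` (modelled here as a subgroup `H` of a complex Lie group `Gc`), and let `Vₙ`
be a relatively compact open identity neighbourhood in `Gc`. If `K ⊆ G·Vₙ` is
compact, then there is a compact set `L ⊆ Vₙ` with `G·K ⊆ G·L`. -/
theorem statement11
    {kc : ℕ} (Gc : Type*) [Group Gc] [TopologicalSpace Gc] [IsTopologicalGroup Gc]
    [ChartedSpace (EuclideanSpace ℂ (Fin kc)) Gc] [LocallyCompactSpace Gc]
    (H : Subgroup Gc) [ConnectedSpace H]
    (Vn : Set Gc) (hVopen : IsOpen Vn) (hV1 : (1 : Gc) ∈ Vn)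
    (hVrc : IsCompact (closure Vn))
    (K : Set Gc) (hK : IsCompact K) (hKsub : K ⊆ (H : Set Gc) * Vn) :
    ∃ L : Set Gc, L ⊆ Vn ∧ IsCompact L ∧ (H : Set Gc) * K ⊆ (H : Set Gc) * L :=
  statement11_general Gc H Vn hVopen K hK hKsub
end

section
/- Let G be a connected Lie group with G ⊆ G_ℂ, V_n a relatively compact open identity neighbourhood in G_ℂ, and K, L ⊆ GV_n compact sets with GK ⊆ GL. Set θ := max{d(h) : h ∈ KL^{-1} ∩ G} < ∞. Then ‖γ‖_{K,N} ≤ e^{Nθ}‖γ‖_{L,N} for all γ ∈ 𝒜_n(G) and N ∈ ℕ₀. -/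
open Filter Topology Set MeasureTheory
open scoped Pointwise ENNReal

set_option linter.unusedSectionVars false

noncomputable section

/-- ℂ-analytic on a set: continuous and locally a pointwise convergent series of
continuous homogeneous complex polynomials. -/
def IsCAnalyticOn {Z E : Type*} [AddCommGroup Z] [Module ℂ Z] [TopologicalSpace Z]
    [AddCommGroup E] [Module ℂ E] [TopologicalSpace E]
    (f : Z → E) (U : Set Z) : Prop :=
  ContinuousOn f U ∧ ∀ x ∈ U, ∃ V ∈ 𝓝 x, V ⊆ U ∧
    ∃ p : (n : ℕ) → ContinuousMultilinearMap ℂ (fun _ : Fin n => Z) E,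
      ∀ y ∈ V, HasSum (fun n => p n fun _ => y - x) (f y)

section CAnalytic

variable {Z E : Type*} [AddCommGroup Z] [Module ℂ Z] [TopologicalSpace Z]
  [AddCommGroup E] [Module ℂ E] [TopologicalSpace E]

theorem IsCAnalyticOn.add [IsTopologicalAddGroup E] {f g : Z → E} {U : Set Z}
    (hf : IsCAnalyticOn f U) (hg : IsCAnalyticOn g U) : IsCAnalyticOn (f + g) U := by
  refine ⟨hf.1.add hg.1, fun x hx => ?_⟩
  obtain ⟨V1, hV1, hV1U, p, hp⟩ := hf.2 x hx
  obtain ⟨V2, hV2, hV2U, q, hq⟩ := hg.2 x hx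
  refine ⟨V1 ∩ V2, Filter.inter_mem hV1 hV2, Set.inter_subset_left.trans hV1U,
    fun n => p n + q n, fun y hy => ?_⟩
  simpa [ContinuousMultilinearMap.add_apply] using (hp y hy.1).add (hq y hy.2)

theorem IsCAnalyticOn.smul [IsTopologicalAddGroup E] [ContinuousConstSMul ℂ E]
    (c : ℂ) {f : Z → E} {U : Set Z} (hf : IsCAnalyticOn f U) :
    IsCAnalyticOn (c • f) U := by
  refine ⟨hf.1.const_smul c, fun x hx => ?_⟩
  obtain ⟨V1, hV1, hV1U, p, hp⟩ := hf.2 x hx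
  refine ⟨V1, hV1, hV1U, fun n => c • p n, fun y hy => ?_⟩
  simpa [ContinuousMultilinearMap.smul_apply] using (hp y hy).const_smul c

theorem IsCAnalyticOn.zero {U : Set Z} (hU : IsOpen U) :
    IsCAnalyticOn (0 : Z → E) U := by
  refine ⟨continuousOn_const, fun x hx => ?_⟩
  exact ⟨U, hU.mem_nhds hx, le_refl U, fun _ => 0, fun y _ => by
    simpa [ContinuousMultilinearMap.zero_apply] using hasSum_zero⟩

theorem IsCAnalyticOn.mono {f : Z → E} {U U' : Set Z} (hf : IsCAnalyticOn f U)
    (hsub : U' ⊆ U) (hU' : IsOpen U') : IsCAnalyticOn f U' := by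
  refine ⟨hf.1.mono hsub, fun x hx => ?_⟩
  obtain ⟨V1, hV1, hV1U, p, hp⟩ := hf.2 x (hsub hx)
  exact ⟨V1 ∩ U', Filter.inter_mem hV1 (hU'.mem_nhds hx), Set.inter_subset_right,
    p, fun y hy => hp y hy.1⟩

end CAnalytic

/-- ℂ-analytic (holomorphic) map on a subset of a manifold charted over a complex
locally convex space `X`. -/
def HolomorphicOnM (X : Type*) {Gc E : Type*} [AddCommGroup X] [Module ℂ X]
    [TopologicalSpace X] [TopologicalSpace Gc] [ChartedSpace X Gc]
    [AddCommGroup E] [Module ℂ E] [TopologicalSpace E]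
    (f : Gc → E) (S : Set Gc) : Prop :=
  ∀ x ∈ S, IsCAnalyticOn (f ∘ (chartAt X x).symm)
    ((chartAt X x).target ∩ (chartAt X x).symm ⁻¹' S)

section Holo

variable (X : Type*) {Gc E : Type*} [AddCommGroup X] [Module ℂ X]
  [TopologicalSpace X] [TopologicalSpace Gc] [ChartedSpace X Gc]
  [AddCommGroup E] [Module ℂ E] [TopologicalSpace E]

theorem HolomorphicOnM.add' [IsTopologicalAddGroup E] {f g : Gc → E} {S : Set Gc}
    (hf : HolomorphicOnM X f S) (hg : HolomorphicOnM X g S) :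
    HolomorphicOnM X (f + g) S :=
  fun x hx => (hf x hx).add (hg x hx)

theorem HolomorphicOnM.smul' [IsTopologicalAddGroup E] [ContinuousConstSMul ℂ E]
    (c : ℂ) {f : Gc → E} {S : Set Gc} (hf : HolomorphicOnM X f S) :
    HolomorphicOnM X (c • f) S :=
  fun x hx => (hf x hx).smul c

theorem HolomorphicOnM.zero' {S : Set Gc} (hS : IsOpen S) :
    HolomorphicOnM X (0 : Gc → E) S :=
  fun x _ => IsCAnalyticOn.zero
    ((chartAt X x).symm.isOpen_inter_preimage hS)

theorem HolomorphicOnM.mono' {f : Gc → E} {S S' : Set Gc}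
    (hf : HolomorphicOnM X f S) (hsub : S' ⊆ S) (hS' : IsOpen S') :
    HolomorphicOnM X f S' :=
  fun x hx => (hf x (hsub hx)).mono
    (Set.inter_subset_inter_right _ (Set.preimage_mono hsub))
    ((chartAt X x).symm.isOpen_inter_preimage hS')

end Holo

/-- The `E`-valued integral of `f` converges absolutely: `∫ q ∘ f dμ < ∞` for every
continuous seminorm `q`. -/
def AbsolutelyConvergent {α E : Type*} [MeasurableSpace α]
    [AddCommGroup E] [Module ℂ E] [TopologicalSpace E]
    (μ : Measure α) (f : α → E) : Prop :=
  ∀ q : Seminorm ℂ E, Continuous q → ∫⁻ a, ENNReal.ofReal (q (f a)) ∂μ < ⊤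

section Groups

variable (X : Type*) [AddCommGroup X] [Module ℂ X] [TopologicalSpace X]
variable {Gc : Type*} [Group Gc] [TopologicalSpace Gc] [IsTopologicalGroup Gc]
  [ChartedSpace X Gc]

/-- `η : G_ℂ → ℂ` is a superdecaying ℂ-analytic extension of `γ : G → ℂ` relative to
the identity neighbourhood `V ⊆ G_ℂ`:  `η` is holomorphic on `V·G`, restricts to `γ`
on `G`, and `sup{ |η(z⁻¹g)| e^{N d(g)} : z ∈ K, g ∈ G } < ∞` for every compact
`K ⊆ V` and every `N ∈ ℕ₀`. -/
def AnalExt (H : Subgroup Gc) (d : H → ℝ) (V : Set Gc) (γ : H → ℂ) (η : Gc → ℂ) :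
    Prop :=
  HolomorphicOnM X η (V * (H : Set Gc)) ∧ (∀ x : H, η ↑x = γ x) ∧
    ∀ K : Set Gc, K ⊆ V → IsCompact K → ∀ N : ℕ, ∃ C : ℝ,
      ∀ z ∈ K, ∀ g : H, ‖η (z⁻¹ * ↑g)‖ * Real.exp (N * d g) ≤ C

/-- The space `𝒜ₙ(G)` of superdecaying analytic functions on `G = H`, realized as a
subspace of `G → ℂ`: functions admitting a superdecaying ℂ-analytic extension to
`Vₙ·G ⊆ G_ℂ`. -/
def Anal (H : Subgroup Gc) (d : H → ℝ) (V : Set Gc) (hV : IsOpen V) :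
    Submodule ℂ (H → ℂ) where
  carrier := {γ | ∃ η, AnalExt X H d V γ η}
  add_mem' := by
    rintro γ₁ γ₂ ⟨η₁, h₁, e₁, b₁⟩ ⟨η₂, h₂, e₂, b₂⟩
    refine ⟨η₁ + η₂, h₁.add' X h₂, fun x => by simp [e₁ x, e₂ x], ?_⟩
    intro K hKV hK N
    obtain ⟨C₁, hC₁⟩ := b₁ K hKV hK N
    obtain ⟨C₂, hC₂⟩ := b₂ K hKV hK N
    refine ⟨C₁ + C₂, fun z hz g => ?_⟩
    calc ‖(η₁ + η₂) (z⁻¹ * ↑g)‖ * Real.exp (N * d g)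
        ≤ (‖η₁ (z⁻¹ * ↑g)‖ + ‖η₂ (z⁻¹ * ↑g)‖) * Real.exp (N * d g) := by
          gcongr
          exact norm_add_le _ _
      _ = ‖η₁ (z⁻¹ * ↑g)‖ * Real.exp (N * d g) + ‖η₂ (z⁻¹ * ↑g)‖ * Real.exp (N * d g) := by
          ring
      _ ≤ C₁ + C₂ := add_le_add (hC₁ z hz g) (hC₂ z hz g)
  zero_mem' := by
    refine ⟨0, HolomorphicOnM.zero' X (hV.mul_right), fun x => rfl, ?_⟩
    intro K _ _ N
    exact ⟨0, fun z _ g => by simp⟩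
  smul_mem' := by
    rintro c γ ⟨η, h, e, b⟩
    refine ⟨c • η, h.smul' X c, fun x => by simp [e x], ?_⟩
    intro K hKV hK N
    obtain ⟨C, hC⟩ := b K hKV hK N
    refine ⟨‖c‖ * C, fun z hz g => ?_⟩
    calc ‖(c • η) (z⁻¹ * ↑g)‖ * Real.exp (N * d g)
        = ‖c‖ * (‖η (z⁻¹ * ↑g)‖ * Real.exp (N * d g)) := by
          simp [norm_smul, mul_assoc]
      _ ≤ ‖c‖ * C := by
          have := hC z hz g
          exact mul_le_mul_of_nonneg_left this (norm_nonneg c)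

theorem mem_Anal {H : Subgroup Gc} {d : H → ℝ} {V : Set Gc} {hV : IsOpen V}
    {γ : H → ℂ} : γ ∈ Anal X H d V hV ↔ ∃ η, AnalExt X H d V γ η :=
  Iff.rfl

/-- A chosen superdecaying analytic extension of `γ ∈ 𝒜ₙ(G)` to `G_ℂ`
(unique on `Vₙ·G` by the identity theorem). -/
def extA {H : Subgroup Gc} {d : H → ℝ} {V : Set Gc} {hV : IsOpen V}
    (γ : Anal X H d V hV) : Gc → ℂ :=
  ((mem_Anal X).mp γ.2).choose

/-- The norm `‖γ‖_{K,N} = sup{ |γ̃(z⁻¹g)| e^{N d(g)} : z ∈ K, g ∈ G }` on `𝒜ₙ(G)`. -/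
def Anorm {H : Subgroup Gc} {d : H → ℝ} {V : Set Gc} {hV : IsOpen V}
    (K : Set Gc) (N : ℕ) (γ : Anal X H d V hV) : ℝ :=
  ⨆ (z : K) (g : H), ‖extA X γ ((z : Gc)⁻¹ * ↑g)‖ * Real.exp (N * d g)

/-- Distance version of the norms `‖·‖_{K,N}`, applied to the (pointwise) difference
of the analytic extensions of `γ` and `γ₀`. -/
def AnormDiff {H : Subgroup Gc} {d : H → ℝ} {V : Set Gc} {hV : IsOpen V}
    (K : Set Gc) (N : ℕ) (γ γ₀ : Anal X H d V hV) : ℝ :=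
  ⨆ (z : K) (g : H),
    ‖extA X γ ((z : Gc)⁻¹ * ↑g) - extA X γ₀ ((z : Gc)⁻¹ * ↑g)‖ * Real.exp (N * d g)

end Groups

section Vectors

variable (X : Type*) [AddCommGroup X] [Module ℂ X] [TopologicalSpace X]
variable {Gc : Type*} [Group Gc] [TopologicalSpace Gc] [IsTopologicalGroup Gc]
  [ChartedSpace X Gc]
variable {E : Type*} [AddCommGroup E] [Module ℂ E] [TopologicalSpace E]

/-- `f : G_ℂ → E` is a ℂ-analytic extension of the orbit map `g ↦ π(g)v` to `S`. -/
def OrbitExtends (H : Subgroup Gc) (π : H → E → E) (S : Set Gc) (v : E)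
    (f : Gc → E) : Prop :=
  HolomorphicOnM X f S ∧ ∀ g : H, f ↑g = π g v

/-- The space `Eₙ` of vectors whose orbit map extends ℂ-analytically to `S = G·Vₙ`. -/
def AnVec [IsTopologicalAddGroup E] [ContinuousConstSMul ℂ E]
    (H : Subgroup Gc) (π : H → E → E) (hπ : ∀ g : H, IsLinearMap ℂ (π g))
    (S : Set Gc) (hS : IsOpen S) : Submodule ℂ E where
  carrier := {v | ∃ f, OrbitExtends X H π S v f}
  add_mem' := by
    rintro v w ⟨f₁, h₁, e₁⟩ ⟨f₂, h₂, e₂⟩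
    exact ⟨f₁ + f₂, h₁.add' X h₂, fun g => by simp [e₁ g, e₂ g, (hπ g).map_add]⟩
  zero_mem' := by
    refine ⟨0, HolomorphicOnM.zero' X hS, fun g => ?_⟩
    have : π g (0 : E) = 0 := by
      simpa using (hπ g).map_smul 0 0
    simp [this]
  smul_mem' := by
    rintro c v ⟨f, h, e⟩
    exact ⟨c • f, h.smul' X c, fun g => by simp [e g, (hπ g).map_smul]⟩

theorem mem_AnVec [IsTopologicalAddGroup E] [ContinuousConstSMul ℂ E]
    {H : Subgroup Gc} {π : H → E → E} {hπ : ∀ g : H, IsLinearMap ℂ (π g)}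
    {S : Set Gc} {hS : IsOpen S} {v : E} :
    v ∈ AnVec X H π hπ S hS ↔ ∃ f, OrbitExtends X H π S v f :=
  Iff.rfl

/-- A chosen ℂ-analytic extension `π̃_v` of the orbit map of `v ∈ Eₙ`. -/
def extV [IsTopologicalAddGroup E] [ContinuousConstSMul ℂ E]
    {H : Subgroup Gc} {π : H → E → E} {hπ : ∀ g : H, IsLinearMap ℂ (π g)}
    {S : Set Gc} {hS : IsOpen S} (v : AnVec X H π hπ S hS) : Gc → E :=
  ((mem_AnVec X).mp v.2).choose

variable [IsTopologicalAddGroup E] [ContinuousConstSMul ℂ E]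

theorem AnVec_mono {H : Subgroup Gc} {π : H → E → E}
    {hπ : ∀ g : H, IsLinearMap ℂ (π g)} {S S' : Set Gc} {hS : IsOpen S}
    {hS' : IsOpen S'} (hsub : S' ⊆ S) :
    AnVec X H π hπ S hS ≤ AnVec X H π hπ S' hS' := by
  rintro v ⟨f, h, e⟩
  exact ⟨f, h.mono' X hsub hS', e⟩

/-- The space `E^ω = ⋃ₙ Eₙ` of analytic vectors (with `Sₙ = G·Vₙ` decreasing). -/
def AnVecU (H : Subgroup Gc) (π : H → E → E) (hπ : ∀ g : H, IsLinearMap ℂ (π g))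
    (S : ℕ → Set Gc) (hS : ∀ n, IsOpen (S n)) (hdec : ∀ n, S (n + 1) ⊆ S n) :
    Submodule ℂ E where
  carrier := ⋃ n, (AnVec X H π hπ (S n) (hS n) : Set E)
  add_mem' := by
    have mono : ∀ {n m : ℕ}, n ≤ m →
        AnVec X H π hπ (S n) (hS n) ≤ AnVec X H π hπ (S m) (hS m) := by
      intro n m hnm
      induction hnm with
      | refl => exact le_rfl
      | step h ih => exact ih.trans (AnVec_mono X (hdec _))
    rintro v w hv hw
    simp only [Set.mem_iUnion, SetLike.mem_coe] at hv hw ⊢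
    obtain ⟨n, hn⟩ := hv
    obtain ⟨m, hm⟩ := hw
    exact ⟨max n m, Submodule.add_mem _ (mono (le_max_left n m) hn)
      (mono (le_max_right n m) hm)⟩
  zero_mem' := by
    simp only [Set.mem_iUnion, SetLike.mem_coe]
    exact ⟨0, Submodule.zero_mem _⟩
  smul_mem' := by
    rintro c v hv
    simp only [Set.mem_iUnion, SetLike.mem_coe] at hv ⊢
    obtain ⟨n, hn⟩ := hv
    exact ⟨n, Submodule.smul_mem _ c hn⟩

theorem Anal_mono {H : Subgroup Gc} {d : H → ℝ} {V V' : Set Gc} {hV : IsOpen V}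
    {hV' : IsOpen V'} (hsub : V' ⊆ V) :
    Anal X H d V hV ≤ Anal X H d V' hV' := by
  rintro γ ⟨η, h, e, b⟩
  refine ⟨η, h.mono' X (Set.mul_subset_mul_right hsub) (hV'.mul_right), e, ?_⟩
  intro K hKV hK N
  exact b K (hKV.trans hsub) hK N

/-- The space `𝒜(G) = ⋃ₙ 𝒜ₙ(G)` of superdecaying analytic functions
(with `Vₙ` a decreasing sequence of identity neighbourhoods). -/
def AnalU (H : Subgroup Gc) (d : H → ℝ) (V : ℕ → Set Gc) (hV : ∀ n, IsOpen (V n))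
    (hdec : ∀ n, V (n + 1) ⊆ V n) : Submodule ℂ (H → ℂ) where
  carrier := ⋃ n, (Anal X H d (V n) (hV n) : Set (H → ℂ))
  add_mem' := by
    have mono : ∀ {n m : ℕ}, n ≤ m →
        Anal X H d (V n) (hV n) ≤ Anal X H d (V m) (hV m) := by
      intro n m hnm
      induction hnm with
      | refl => exact le_rfl
      | step h ih => exact ih.trans (Anal_mono X (hdec _))
    rintro γ₁ γ₂ h1 h2
    simp only [Set.mem_iUnion, SetLike.mem_coe] at h1 h2 ⊢
    obtain ⟨n, hn⟩ := h1
    obtain ⟨m, hm⟩ := h2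
    exact ⟨max n m, Submodule.add_mem _ (mono (le_max_left n m) hn)
      (mono (le_max_right n m) hm)⟩
  zero_mem' := by
    simp only [Set.mem_iUnion, SetLike.mem_coe]
    exact ⟨0, Submodule.zero_mem _⟩
  smul_mem' := by
    rintro c γ h
    simp only [Set.mem_iUnion, SetLike.mem_coe] at h ⊢
    obtain ⟨n, hn⟩ := h
    exact ⟨n, Submodule.smul_mem _ c hn⟩

end Vectors

/-- The distance function of a left-invariant Riemannian metric on a Lie group `G`:
a left-invariant, proper distance function defining the topology of `G`. -/
structure LeftInvDist (G : Type*) [Group G] [TopologicalSpace G] where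
  dist : G → G → ℝ
  dist_self : ∀ x, dist x x = 0
  dist_pos : ∀ x y, x ≠ y → 0 < dist x y
  dist_comm : ∀ x y, dist x y = dist y x
  dist_triangle : ∀ x y z, dist x z ≤ dist x y + dist y z
  left_invariant : ∀ g x y, dist (g * x) (g * y) = dist x y
  induces : ∀ (x : G) (s : Set G), s ∈ 𝓝 x ↔ ∃ ε > 0, {y | dist x y < ε} ⊆ s
  proper : ∀ (x : G) (R : ℝ), IsCompact {y | dist x y ≤ R}

/-- The function `d(g) = 𝐝(g,1)` associated to a left-invariant distance. -/
def LeftInvDist.d {G : Type*} [Group G] [TopologicalSpace G] (D : LeftInvDist G)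
    (g : G) : ℝ :=
  D.dist g 1

open scoped Manifold

/-!
Write `z ∈ K` as `z = a w` with `a ∈ G`, `w ∈ L`; then `a = z w⁻¹ ∈ KL⁻¹ ∩ G`. Since
`z⁻¹g = w⁻¹(a⁻¹g)` and `d(g) ≤ d(a) + d(a⁻¹g)`, every term of `‖γ‖_{K,N}` is at most `e^{Nθ}`
times a term of `‖γ‖_{L,N}`. Two finiteness facts make the suprema behave: `θ < ∞`, because `G`
is locally compact for its proper metric, hence closed in `G_ℂ`, so `KL⁻¹ ∩ G` is compact; and
`‖γ‖_{L,N} < ∞`, because `L` is covered by finitely many translates `aW` of compact sets `W ⊆ Vₙ`.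
-/

namespace LeftInvDist

variable {G : Type*} [Group G] [TopologicalSpace G]

theorem d_mul_le (D : LeftInvDist G) (g h : G) : D.d (g * h) ≤ D.d g + D.d h := by
  have htri := D.dist_triangle (g * h) g 1
  have hinv : D.dist (g * h) (g * 1) = D.dist h 1 := D.left_invariant g h 1
  rw [mul_one] at hinv
  unfold LeftInvDist.d
  linarith

theorem continuous_d (D : LeftInvDist G) : Continuous D.d := by
  refine continuous_iff_continuousAt.mpr fun x s hs => ?_
  obtain ⟨ε, hε, hball⟩ := Metric.mem_nhds_iff.mp hs
  rw [Filter.mem_map, D.induces]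
  refine ⟨ε, hε, fun y (hy : D.dist x y < ε) => hball ?_⟩
  have h₁ : D.d y ≤ D.dist y x + D.d x := D.dist_triangle y x 1
  have h₂ : D.d x ≤ D.dist x y + D.d y := D.dist_triangle x y 1
  rw [D.dist_comm] at h₁
  rw [Metric.mem_ball, Real.dist_eq, abs_sub_lt_iff]
  constructor <;> linarith

theorem weaklyLocallyCompactSpace (D : LeftInvDist G) : WeaklyLocallyCompactSpace G :=
  ⟨fun x => ⟨_, D.proper x 1,
    (D.induces x _).mpr ⟨1, one_pos, fun _ hy => le_of_lt (show D.dist x _ < 1 from hy)⟩⟩⟩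

end LeftInvDist

theorem Subgroup.isClosed_of_weaklyLocallyCompactSpace {G : Type*} [Group G]
    [TopologicalSpace G] [IsTopologicalGroup G] [T2Space G] (H : Subgroup G)
    [WeaklyLocallyCompactSpace H] : IsClosed (H : Set G) := by
  obtain ⟨B, hBc, hB1⟩ := exists_compact_mem_nhds (1 : H)
  obtain ⟨U, hU1, hUB⟩ := (mem_nhds_subtype _ _ _).mp hB1
  obtain ⟨O, hOU, hOo, hO1⟩ := mem_nhds_iff.mp hU1
  -- Near `1`, `H` coincides with the compact, hence closed, set `B`.
  have hclosureO : _root_.closure (H : Set G) ∩ O ⊆ H := by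
    intro x ⟨hxH, hxO⟩
    have hsub : O ∩ (H : Set G) ⊆ Subtype.val '' B :=
      fun y ⟨hyO, hyH⟩ => ⟨⟨y, hyH⟩, hUB (hOU hyO), rfl⟩
    obtain ⟨b, -, rfl⟩ := (_root_.closure_mono hsub).trans
      (hBc.image continuous_subtype_val).isClosed.closure_subset (hOo.inter_closure ⟨hxO, hxH⟩)
    exact b.2
  refine closure_subset_iff_isClosed.mp fun x hx => ?_
  obtain ⟨_, ⟨o, hoO, rfl⟩, hxoH⟩ := mem_closure_iff.mp hx (x • O) (hOo.smul x)
    (by simpa using Set.smul_mem_smul_set (a := x) hO1)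
  have hoH : o ∈ H := by
    have hxo : x • o ∈ H.topologicalClosure := H.le_topologicalClosure hxoH
    have ho : o ∈ H.topologicalClosure := by
      simpa using mul_mem (inv_mem (show x ∈ H.topologicalClosure from hx)) hxo
    exact hclosureO ⟨ho, hoO⟩
  simpa using mul_mem hxoH (inv_mem hoH)

section DecayWeight

variable {Gc : Type*} [Group Gc] [TopologicalSpace Gc] {H : Subgroup Gc}

def decayWeight (η : Gc → ℂ) (d : H → ℝ) (N : ℕ) (z : Gc) (g : H) : ℝ :=
  ‖η (z⁻¹ * ↑g)‖ * Real.exp (N * d g)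

theorem decayWeight_nonneg (η : Gc → ℂ) (d : H → ℝ) (N : ℕ) (z : Gc) (g : H) :
    0 ≤ decayWeight η d N z g := by
  unfold decayWeight
  positivity

theorem decayWeight_mul_le (D : LeftInvDist H) (η : Gc → ℂ) (N : ℕ) (a : H) (w : Gc)
    (g : H) :
    decayWeight η D.d N (a * w) g ≤
      Real.exp (N * D.d a) * decayWeight η D.d N w (a⁻¹ * g) := by
  have hd : Real.exp (N * D.d g) ≤ Real.exp (N * D.d a) * Real.exp (N * D.d (a⁻¹ * g)) := by
    rw [← Real.exp_add, ← mul_add]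
    gcongr
    simpa using D.d_mul_le a (a⁻¹ * g)
  have harg : (a * w)⁻¹ * (g : Gc) = w⁻¹ * ↑(a⁻¹ * g) := by simp [mul_assoc]
  unfold decayWeight
  rw [harg, mul_left_comm]
  gcongr

end DecayWeight

section Anorm

variable (X : Type*) [AddCommGroup X] [Module ℂ X] [TopologicalSpace X]
variable {Gc : Type*} [Group Gc] [TopologicalSpace Gc] [IsTopologicalGroup Gc]
  [ChartedSpace X Gc] {H : Subgroup Gc}

theorem AnalExt.exists_bound_decayWeight [LocallyCompactSpace Gc] {D : LeftInvDist H}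
    {V : Set Gc} {γ : H → ℂ} {η : Gc → ℂ} (hη : AnalExt X H D.d V γ η) (hV : IsOpen V)
    {L : Set Gc} (hL : IsCompact L) (hLV : L ⊆ (H : Set Gc) * V) (N : ℕ) :
    ∃ C, ∀ w ∈ L, ∀ g : H, decayWeight η D.d N w g ≤ C := by
  refine hL.induction_on (p := fun s => ∃ C, ∀ w ∈ s, ∀ g : H, decayWeight η D.d N w g ≤ C)
    ⟨0, by simp⟩ ?_ ?_ ?_
  · rintro s t hst ⟨C, hC⟩
    exact ⟨C, fun w hw => hC w (hst hw)⟩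
  · rintro s t ⟨C₁, hC₁⟩ ⟨C₂, hC₂⟩
    refine ⟨max C₁ C₂, fun w hw g => ?_⟩
    rcases hw with hw | hw
    exacts [(hC₁ w hw g).trans (le_max_left _ _), (hC₂ w hw g).trans (le_max_right _ _)]
  · intro z hz
    obtain ⟨a, ha, v, hv, rfl⟩ := hLV hz
    obtain ⟨W, hWv, hWV, hWc⟩ := local_compact_nhds (hV.mem_nhds hv)
    obtain ⟨C, hC⟩ := hη.2.2 W hWV hWc N
    refine ⟨a • W, mem_nhdsWithin_of_mem_nhds ((smul_mem_nhds_smul_iff a).mpr hWv),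
      Real.exp (N * D.d ⟨a, ha⟩) * C, ?_⟩
    rintro _ ⟨u, hu, rfl⟩ g
    exact (decayWeight_mul_le D η N ⟨a, ha⟩ u g).trans (by gcongr; exact hC u hu _)

variable {d : H → ℝ} {V : Set Gc} {hV : IsOpen V} {K : Set Gc} {N : ℕ}

theorem Anorm_nonneg (γ : Anal X H d V hV) : 0 ≤ Anorm X K N γ :=
  Real.iSup_nonneg fun _ => Real.iSup_nonneg fun _ => decayWeight_nonneg _ _ _ _ _

theorem le_Anorm {γ : Anal X H d V hV} {C : ℝ}
    (hC : ∀ w ∈ K, ∀ g : H, decayWeight (extA X γ) d N w g ≤ C) {w : Gc} (hw : w ∈ K)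
    (g : H) : decayWeight (extA X γ) d N w g ≤ Anorm X K N γ := by
  have hrow : BddAbove (range fun g => decayWeight (extA X γ) d N w g) :=
    ⟨C, by rintro _ ⟨g, rfl⟩; exact hC w hw g⟩
  have hcol : BddAbove (range fun w : K => ⨆ g, decayWeight (extA X γ) d N w g) :=
    ⟨C, by rintro _ ⟨w, rfl⟩; exact ciSup_le (hC w w.2)⟩
  exact (le_ciSup hrow g).trans (le_ciSup hcol ⟨w, hw⟩)

theorem Anorm_le {γ : Anal X H d V hV} {c : ℝ} (hc : 0 ≤ c)
    (h : ∀ z ∈ K, ∀ g : H, decayWeight (extA X γ) d N z g ≤ c) : Anorm X K N γ ≤ c :=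
  Real.iSup_le (fun z => Real.iSup_le (h z z.2) hc) hc

end Anorm

theorem statement12_general
    {kc : ℕ} {Gc : Type*} [Group Gc] [TopologicalSpace Gc] [IsTopologicalGroup Gc]
    [ChartedSpace (EuclideanSpace ℂ (Fin kc)) Gc]
    (H : Subgroup Gc)
    -- `d` comes from a left-invariant Riemannian distance on `G`
    (D : LeftInvDist H)
    -- the relatively compact, symmetric, connected open identity neighbourhood `Vₙ`
    (Vn : Set Gc) (hVo : IsOpen Vn)
    -- compact sets `K, L ⊆ G·Vₙ` with `G·K ⊆ G·L`
    (K L : Set Gc) (hK : IsCompact K) (hL : IsCompact L)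
    (hLsub : L ⊆ (H : Set Gc) * Vn)
    (hKL : (H : Set Gc) * K ⊆ (H : Set Gc) * L)
    -- `θ = max{d(h) : h ∈ K L⁻¹ ∩ G}`
    (θ : ℝ) (hθ : θ = sSup (D.d '' {h : H | (h : Gc) ∈ K * L⁻¹})) :
    ∀ (γ : Anal (EuclideanSpace ℂ (Fin kc)) H D.d Vn hVo) (N : ℕ),
      Anorm (EuclideanSpace ℂ (Fin kc)) K N γ ≤
        Real.exp (N * θ) * Anorm (EuclideanSpace ℂ (Fin kc)) L N γ := by
  intro γ N
  have : T1Space Gc := ChartedSpace.t1Space (EuclideanSpace ℂ (Fin kc)) Gc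
  have : LocallyCompactSpace Gc :=
    ChartedSpace.locallyCompactSpace (EuclideanSpace ℂ (Fin kc)) Gc
  have := D.weaklyLocallyCompactSpace
  have hη : AnalExt _ H D.d Vn γ (extA _ γ) := ((mem_Anal _).mp γ.2).choose_spec
  have hd_le_θ : ∀ a : H, (a : Gc) ∈ K * L⁻¹ → D.d a ≤ θ := by
    have hS : IsCompact {h : H | (h : Gc) ∈ K * L⁻¹} :=
      H.isClosed_of_weaklyLocallyCompactSpace.isClosedEmbedding_subtypeVal.isCompact_preimage
        (hK.mul hL.inv)
    exact fun a ha => hθ ▸ le_csSup (hS.bddAbove_image D.continuous_d.continuousOn) ⟨a, ha, rfl⟩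
  obtain ⟨C, hC⟩ := hη.exists_bound_decayWeight _ hVo hL hLsub N
  refine Anorm_le _ (mul_nonneg (Real.exp_pos _).le (Anorm_nonneg _ γ)) fun z hz g => ?_
  obtain ⟨a, ha, w, hw, rfl⟩ := hKL (by simpa using Set.mul_mem_mul H.one_mem hz)
  have ha_le_θ : D.d ⟨a, ha⟩ ≤ θ :=
    hd_le_θ _ (by simpa using Set.mul_mem_mul hz (Set.inv_mem_inv.mpr hw))
  calc decayWeight _ D.d N (a * w) g
      ≤ Real.exp (N * D.d ⟨a, ha⟩) * decayWeight _ D.d N w (⟨a, ha⟩⁻¹ * g) :=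
        decayWeight_mul_le D _ N ⟨a, ha⟩ w g
    _ ≤ Real.exp (N * θ) * Anorm _ L N γ :=
        mul_le_mul (by gcongr) (le_Anorm _ hC hw _) (decayWeight_nonneg ..) (Real.exp_pos _).le

/-- **Lemma.** Let `G ⊆ G_ℂ` be a connected Lie group, `Vₙ` a relatively compact,
symmetric, open identity neighbourhood in `G_ℂ`, and `K, L ⊆ G·Vₙ` compact sets with
`G·K ⊆ G·L`.  Set `θ := sup{ d(h) : h ∈ KL⁻¹ ∩ G }`.  Then
`‖γ‖_{K,N} ≤ e^{Nθ} ‖γ‖_{L,N}` for all `γ ∈ 𝒜ₙ(G)` and `N ∈ ℕ₀`. -/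
theorem statement12
    {kc : ℕ} {Gc : Type*} [Group Gc] [TopologicalSpace Gc] [IsTopologicalGroup Gc]
    [ChartedSpace (EuclideanSpace ℂ (Fin kc)) Gc]
    [LieGroup 𝓘(ℂ, EuclideanSpace ℂ (Fin kc)) (⊤ : ℕ∞) Gc]
    (H : Subgroup Gc) [ConnectedSpace H]
    -- `d` comes from a left-invariant Riemannian distance on `G`
    (D : LeftInvDist H)
    -- the relatively compact, symmetric, connected open identity neighbourhood `Vₙ`
    (Vn : Set Gc) (hVo : IsOpen Vn) (hV1 : (1 : Gc) ∈ Vn) (hVsym : Vn⁻¹ = Vn)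
    (hVc : IsConnected Vn) (hVrc : IsCompact (closure Vn))
    -- compact sets `K, L ⊆ G·Vₙ` with `G·K ⊆ G·L`
    (K L : Set Gc) (hK : IsCompact K) (hL : IsCompact L)
    (hKsub : K ⊆ (H : Set Gc) * Vn) (hLsub : L ⊆ (H : Set Gc) * Vn)
    (hKL : (H : Set Gc) * K ⊆ (H : Set Gc) * L)
    -- `θ = max{d(h) : h ∈ K L⁻¹ ∩ G}`
    (θ : ℝ) (hθ : θ = sSup (D.d '' {h : H | (h : Gc) ∈ K * L⁻¹})) :
    ∀ (γ : Anal (EuclideanSpace ℂ (Fin kc)) H D.d Vn hVo) (N : ℕ),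
      Anorm (EuclideanSpace ℂ (Fin kc)) K N γ ≤
        Real.exp (N * θ) * Anorm (EuclideanSpace ℂ (Fin kc)) L N γ :=
  statement12_general H D Vn hVo K L hK hL hLsub hKL θ hθ
end
end

section
/- Let G be a connected Lie group such that G ⊆ G_ℂ and the Lie algebra L(G) is compact. Then there exists a basis (V_n)_{n∈ℕ} of open, connected, relatively compact identity neighbourhoods V_n ⊆ G_ℂ such that closure(V_{n+1}) ⊆ V_n and gV_ng^{-1} = V_n for all n ∈ ℕ and g ∈ G; in addition one can achieve that for each n ∈ ℕ and each compact K ⊆ V_n, the set {gxg^{-1} : g ∈ G, x ∈ K} has compact closure contained in V_n. -/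
open Filter Topology Set MeasureTheory
open scoped Pointwise ENNReal

set_option linter.unusedSectionVars false

noncomputable section

section Incl

variable (X : Type*) [AddCommGroup X] [Module ℂ X] [TopologicalSpace X]
variable {Gc : Type*} [Group Gc] [TopologicalSpace Gc] [IsTopologicalGroup Gc]
  [ChartedSpace X Gc]
variable {E : Type*} [AddCommGroup E] [Module ℂ E] [TopologicalSpace E]
  [IsTopologicalAddGroup E] [ContinuousConstSMul ℂ E]

/-- The inclusion map `𝒜ₙ(G) → 𝒜(G)`. -/
def AnalU.incl {H : Subgroup Gc} {d : H → ℝ} {V : ℕ → Set Gc}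
    {hV : ∀ n, IsOpen (V n)} {hdec : ∀ n, V (n + 1) ⊆ V n} (n : ℕ)
    (γ : Anal X H d (V n) (hV n)) : AnalU X H d V hV hdec :=
  ⟨γ.1, Set.mem_iUnion.mpr ⟨n, γ.2⟩⟩

/-- The inclusion map `Eₙ → E^ω`. -/
def AnVecU.incl {H : Subgroup Gc} {π : H → E → E}
    {hπ : ∀ g : H, IsLinearMap ℂ (π g)} {S : ℕ → Set Gc} {hS : ∀ n, IsOpen (S n)}
    {hdec : ∀ n, S (n + 1) ⊆ S n} (n : ℕ) (v : AnVec X H π hπ (S n) (hS n)) :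
    AnVecU X H π hπ S hS hdec :=
  ⟨v.1, Set.mem_iUnion.mpr ⟨n, v.2⟩⟩

end Incl

/-- Formalization of the hypothesis that the Lie algebra `L(G)` of a connected
group `G ⊆ G_ℂ` is compact.  The (complexified) Lie algebra is modelled on the
chart space `X` of `G_ℂ`, with exponential map `expc` (a local homeomorphism at
`0`) and adjoint action `Ad` of `G` satisfying `exp (Ad g x) = g (exp x) g⁻¹`;
compactness of `L(G)` is expressed by an `Ad(G)`-invariant real inner product on
`X` (equivalently, for connected `G`, an inner product making each `e^{ad(x)}`
an isometry). -/
structure CompactLieAlgebraData (X : Type*) [AddCommGroup X] [Module ℂ X]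
    [Module ℝ X] [IsScalarTower ℝ ℂ X] [TopologicalSpace X]
    {Gc : Type*} [Group Gc] [TopologicalSpace Gc] (H : Subgroup Gc) where
  expc : X → Gc
  expc_zero : expc 0 = 1
  expc_cont : Continuous expc
  localHomeo : ∃ φ : OpenPartialHomeomorph X Gc, (0 : X) ∈ φ.source ∧
    φ.source ∈ 𝓝 (0 : X) ∧ ∀ x ∈ φ.source, φ x = expc x
  Ad : H → X ≃ₗ[ℂ] X
  ad_exp : ∀ (g : H) (x : X), expc (Ad g x) = (g : Gc) * expc x * (g : Gc)⁻¹
  inner : X → X → ℝ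
  inner_add : ∀ x y z, inner (x + y) z = inner x z + inner y z
  inner_smul : ∀ (c : ℝ) (x y : X), inner (c • x) y = c * inner x y
  inner_comm : ∀ x y, inner x y = inner y x
  inner_pos : ∀ x, x ≠ 0 → 0 < inner x x
  inner_invariant : ∀ (g : H) (x y : X), inner (Ad g x) (Ad g y) = inner x y

open scoped Manifold


/-! The neighbourhoods are `Vₙ = exp {x : Q x < rₙ}` for the `Ad(G)`-invariant positive definite
quadratic form `Q x = ⟨x, x⟩` and radii `rₙ ↓ 0` small enough that `exp` is a homeomorphism on
`{Q < r₀}`. Since `exp ∘ Ad g = (g · g⁻¹) ∘ exp`, every `Vₙ` and every `exp {Q ≤ σ}` is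
conjugation invariant. A compact `K ⊆ Vₙ` is the image of a compact subset of `{Q < rₙ}`, on which
`Q` attains a maximum `σ < rₙ`; so all conjugates of `K` lie in the compact set
`exp {Q ≤ σ} ⊆ Vₙ`. -/

theorem IsCompact.exists_lt_forall_le {α : Type*} [TopologicalSpace α] {K : Set α}
    (hK : IsCompact K) {f : α → ℝ} (hf : ContinuousOn f K) {ρ : ℝ} (hlt : ∀ x ∈ K, f x < ρ) :
    ∃ σ < ρ, ∀ x ∈ K, f x ≤ σ := by
  rcases K.eq_empty_or_nonempty with rfl | hne
  · exact ⟨ρ - 1, by linarith, by simp⟩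
  · obtain ⟨y, hy, hmax⟩ := hK.exists_isMaxOn hne hf
    exact ⟨f y, hlt y hy, hmax⟩

theorem OpenPartialHomeomorph.exists_lt_subset_image_preimage_Iic {E G : Type*}
    [TopologicalSpace E] [TopologicalSpace G] (φ : OpenPartialHomeomorph E G) {e : E → G}
    (hφe : EqOn φ e φ.source) {f : E → ℝ} (hf : Continuous f) {ρ : ℝ}
    (hsrc : f ⁻¹' Iio ρ ⊆ φ.source) {K : Set G} (hK : IsCompact K)
    (hKV : K ⊆ e '' (f ⁻¹' Iio ρ)) : ∃ σ < ρ, K ⊆ e '' (f ⁻¹' Iic σ) := by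
  have hKt : K ⊆ φ.target := by
    intro x hx
    obtain ⟨y, hy, rfl⟩ := hKV hx
    rw [← hφe (hsrc hy)]
    exact φ.map_source (hsrc hy)
  have hL : IsCompact (φ.symm '' K) := hK.image_of_continuousOn (φ.continuousOn_symm.mono hKt)
  have hLρ : ∀ y ∈ φ.symm '' K, f y < ρ := by
    rintro _ ⟨x, hx, rfl⟩
    obtain ⟨y, hy, rfl⟩ := hKV hx
    rw [← hφe (hsrc hy), φ.left_inv (hsrc hy)]
    exact hy
  obtain ⟨σ, hσ, hLσ⟩ := hL.exists_lt_forall_le hf.continuousOn hLρ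
  refine ⟨σ, hσ, fun x hx => ⟨φ.symm x, hLσ _ (mem_image_of_mem _ hx), ?_⟩⟩
  rw [← hφe (φ.map_target (hKt hx)), φ.right_inv (hKt hx)]

theorem OpenPartialHomeomorph.isOpen_image_of_eqOn {E G : Type*} [TopologicalSpace E]
    [TopologicalSpace G] (φ : OpenPartialHomeomorph E G) {e : E → G} (hφe : EqOn φ e φ.source)
    {s : Set E} (hs : IsOpen s) (hsrc : s ⊆ φ.source) : IsOpen (e '' s) := by
  rw [← (hφe.mono hsrc).image_eq]
  exact φ.isOpen_image_of_subset_source hs hsrc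

section PosDef

variable {E : Type*} [NormedAddCommGroup E] [NormedSpace ℝ E] [FiniteDimensional ℝ E]

theorem QuadraticMap.continuous_of_finiteDimensional (Q : QuadraticForm ℝ E) : Continuous Q := by
  have hB := (QuadraticMap.associated (R := ℝ) Q).toContinuousBilinearMap.continuous
  simpa [QuadraticMap.associated_eq_self_apply] using hB.clm_apply continuous_id

namespace QuadraticMap.PosDef

variable {Q : QuadraticForm ℝ E}

theorem exists_pos_mul_norm_sq_le (hQ : Q.PosDef) : ∃ m > 0, ∀ x, m * ‖x‖ ^ 2 ≤ Q x := by
  rcases subsingleton_or_nontrivial E with hE | hE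
  · exact ⟨1, one_pos, fun x => by simp [Subsingleton.elim x 0]⟩
  obtain ⟨u, hu, hmin⟩ := (isCompact_sphere (0 : E) 1).exists_isMinOn
    (NormedSpace.sphere_nonempty.mpr zero_le_one) Q.continuous_of_finiteDimensional.continuousOn
  have hu0 : u ≠ 0 := ne_zero_of_mem_unit_sphere ⟨u, hu⟩
  refine ⟨Q u, hQ u hu0, fun x => ?_⟩
  rcases eq_or_ne x 0 with rfl | hx
  · simp
  have hx' : ‖x‖ ≠ 0 := norm_ne_zero_iff.mpr hx
  have hxu : ‖x‖⁻¹ • x ∈ Metric.sphere (0 : E) 1 := by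
    simp [norm_smul, hx']
  calc Q u * ‖x‖ ^ 2 ≤ Q (‖x‖⁻¹ • x) * ‖x‖ ^ 2 := by gcongr; exact hmin hxu
    _ = Q x := by rw [Q.map_smul, smul_eq_mul]; field_simp

theorem hasBasis_nhds_zero (hQ : Q.PosDef) :
    (𝓝 (0 : E)).HasBasis (fun ρ : ℝ => 0 < ρ) (fun ρ => Q ⁻¹' Iio ρ) := by
  obtain ⟨m, hm, hmQ⟩ := hQ.exists_pos_mul_norm_sq_le
  refine Metric.nhds_basis_ball.to_hasBasis (fun ε hε => ⟨m * ε ^ 2, by positivity, ?_⟩)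
    fun ρ hρ => Metric.mem_nhds_iff.mp (?_ : Q ⁻¹' Iio ρ ∈ 𝓝 0)
  · intro x hx
    have hlt : m * ‖x‖ ^ 2 < m * ε ^ 2 := (hmQ x).trans_lt hx
    exact mem_ball_zero_iff.mpr ((pow_lt_pow_iff_left₀ (norm_nonneg x) hε.le two_ne_zero).mp
      (lt_of_mul_lt_mul_left hlt hm.le))
  · exact (isOpen_Iio.preimage Q.continuous_of_finiteDimensional).mem_nhds (by simpa using hρ)

theorem isCompact_preimage_Iic (hQ : Q.PosDef) (σ : ℝ) : IsCompact (Q ⁻¹' Iic σ) := by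
  obtain ⟨m, hm, hmQ⟩ := hQ.exists_pos_mul_norm_sq_le
  refine Metric.isCompact_of_isClosed_isBounded
    (isClosed_Iic.preimage Q.continuous_of_finiteDimensional)
    ((Metric.isBounded_closedBall (x := 0) (r := √(σ / m))).subset fun x hx => ?_)
  rw [mem_closedBall_zero_iff]
  refine Real.le_sqrt_of_sq_le ((le_div_iff₀ hm).mpr ?_)
  linarith [hmQ x, show Q x ≤ σ from hx]

theorem starConvex_preimage_Iio (hQ : Q.PosDef) (ρ : ℝ) : StarConvex ℝ 0 (Q ⁻¹' Iio ρ) := by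
  intro y hy a b ha hb hab
  have hb1 : b * b ≤ 1 := mul_le_one₀ (by linarith) hb (by linarith)
  rw [smul_zero, zero_add, mem_preimage, Q.map_smul, smul_eq_mul]
  exact (mul_le_of_le_one_left (hQ.nonneg y) hb1).trans_lt hy

variable {G : Type*} [TopologicalSpace G] {e : E → G}

theorem isConnected_image_preimage_Iio (hQ : Q.PosDef) (he : Continuous e) {ρ : ℝ} (hρ : 0 < ρ) :
    IsConnected (e '' (Q ⁻¹' Iio ρ)) :=
  ((hQ.starConvex_preimage_Iio ρ).isPathConnected (by simpa using hρ)).isConnected.image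
    e he.continuousOn

theorem closure_image_preimage_Iio_subset [T2Space G] (hQ : Q.PosDef) (he : Continuous e)
    (ρ : ℝ) : closure (e '' (Q ⁻¹' Iio ρ)) ⊆ e '' (Q ⁻¹' Iic ρ) :=
  closure_minimal (image_mono (preimage_mono Iio_subset_Iic_self))
    ((hQ.isCompact_preimage_Iic ρ).image he).isClosed

end QuadraticMap.PosDef

end PosDef

namespace CompactLieAlgebraData

variable {X : Type*} [AddCommGroup X] [Module ℂ X] [Module ℝ X] [IsScalarTower ℝ ℂ X]
  [TopologicalSpace X] {Gc : Type*} [Group Gc] [TopologicalSpace Gc] {H : Subgroup Gc}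
  (LG : CompactLieAlgebraData X H)

def normSq : QuadraticForm ℝ X :=
  LinearMap.BilinMap.toQuadraticMap <| LinearMap.mk₂ ℝ LG.inner LG.inner_add LG.inner_smul
    (fun x y z => by rw [LG.inner_comm, LG.inner_add, LG.inner_comm y, LG.inner_comm z])
    (fun c x y => by rw [LG.inner_comm, LG.inner_smul, LG.inner_comm, smul_eq_mul])

theorem normSq_posDef : LG.normSq.PosDef := LG.inner_pos

theorem normSq_Ad (g : H) (x : X) : LG.normSq (LG.Ad g x) = LG.normSq x :=
  LG.inner_invariant g x x

theorem image_Ad_preimage_normSq (g : H) (S : Set ℝ) :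
    LG.Ad g '' (LG.normSq ⁻¹' S) = LG.normSq ⁻¹' S := by
  rw [LinearEquiv.image_eq_preimage_symm]
  ext x
  simp only [mem_preimage]
  rw [← LG.normSq_Ad g, LinearEquiv.apply_symm_apply]

theorem conj_image_expc_preimage_normSq (g : H) (S : Set ℝ) :
    (fun z => (g : Gc) * z * (g : Gc)⁻¹) '' (LG.expc '' (LG.normSq ⁻¹' S)) =
      LG.expc '' (LG.normSq ⁻¹' S) := by
  rw [image_image]
  calc _ = (fun x => LG.expc (LG.Ad g x)) '' (LG.normSq ⁻¹' S) :=
        image_congr fun x _ => (LG.ad_exp g x).symm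
    _ = LG.expc '' (LG.Ad g '' (LG.normSq ⁻¹' S)) := (image_image _ _ _).symm
    _ = _ := by rw [LG.image_Ad_preimage_normSq]

theorem closure_conjugates_subset {S : Set ℝ} (hS : IsClosed (LG.expc '' (LG.normSq ⁻¹' S)))
    {K : Set Gc} (hK : K ⊆ LG.expc '' (LG.normSq ⁻¹' S)) :
    closure {z : Gc | ∃ g : H, ∃ x ∈ K, z = (g : Gc) * x * (g : Gc)⁻¹} ⊆
      LG.expc '' (LG.normSq ⁻¹' S) := by
  refine closure_minimal ?_ hS
  rintro _ ⟨g, x, hx, rfl⟩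
  exact LG.conj_image_expc_preimage_normSq g S ▸ mem_image_of_mem _ (hK hx)

end CompactLieAlgebraData

theorem statement15_general
    {kc : ℕ} {Gc : Type*} [Group Gc] [TopologicalSpace Gc] [IsTopologicalGroup Gc]
    [ChartedSpace (EuclideanSpace ℂ (Fin kc)) Gc]
    (H : Subgroup Gc)
    -- the Lie algebra of `G` is compact
    (LG : CompactLieAlgebraData (EuclideanSpace ℂ (Fin kc)) H) :
    ∃ V : ℕ → Set Gc,
      (∀ n, IsOpen (V n)) ∧
      (∀ n, IsConnected (V n)) ∧
      (∀ n, IsCompact (closure (V n))) ∧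
      (∀ n, (1 : Gc) ∈ V n) ∧
      (∀ n, closure (V (n + 1)) ⊆ V n) ∧
      -- `(Vₙ)` is a neighbourhood basis at `1`
      (∀ W ∈ 𝓝 (1 : Gc), ∃ n, V n ⊆ W) ∧
      -- conjugation invariance under `G`
      (∀ (n : ℕ) (g : H), (fun z => (g : Gc) * z * (g : Gc)⁻¹) '' V n = V n) ∧
      -- compact closures of `G`-conjugates of compact subsets
      (∀ (n : ℕ) (K : Set Gc), K ⊆ V n → IsCompact K →
        IsCompact (closure {z : Gc | ∃ g : H, ∃ x ∈ K, z = (g : Gc) * x * (g : Gc)⁻¹}) ∧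
        closure {z : Gc | ∃ g : H, ∃ x ∈ K, z = (g : Gc) * x * (g : Gc)⁻¹} ⊆ V n) := by
  have : T1Space Gc := ChartedSpace.t1Space (EuclideanSpace ℂ (Fin kc)) Gc
  obtain ⟨φ, -, hsrc, hφe⟩ := LG.localHomeo
  set Q := LG.normSq
  have hQ : Q.PosDef := LG.normSq_posDef
  have hQc : Continuous Q := Q.continuous_of_finiteDimensional
  have hcpt : ∀ σ, IsCompact (LG.expc '' (Q ⁻¹' Iic σ)) := fun σ =>
    (hQ.isCompact_preimage_Iic σ).image LG.expc_cont
  obtain ⟨ρ, hρ, hρsrc⟩ := hQ.hasBasis_nhds_zero.mem_iff.mp hsrc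
  obtain ⟨r, hr_anti, hr_mem, hr_lim⟩ := exists_seq_strictAnti_tendsto' hρ
  have hsub : ∀ n, Q ⁻¹' Iio (r n) ⊆ φ.source := fun n =>
    (preimage_mono (Iio_subset_Iio (hr_mem n).2.le)).trans hρsrc
  have hcl := hQ.closure_image_preimage_Iio_subset LG.expc_cont
  refine ⟨fun n => LG.expc '' (Q ⁻¹' Iio (r n)),
    fun n => φ.isOpen_image_of_eqOn hφe (isOpen_Iio.preimage hQc) (hsub n),
    fun n => hQ.isConnected_image_preimage_Iio LG.expc_cont (hr_mem n).1,
    fun n => (hcpt _).of_isClosed_subset isClosed_closure (hcl _),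
    fun n => ⟨0, by simpa using (hr_mem n).1, LG.expc_zero⟩,
    fun n => (hcl _).trans
      (image_mono (preimage_mono (Iic_subset_Iio.mpr (hr_anti n.lt_succ_self)))),
    fun W hW => ?_, fun n g => LG.conj_image_expc_preimage_normSq g _, fun n K hKV hK => ?_⟩
  · obtain ⟨ρ', hρ', hρ'W⟩ := hQ.hasBasis_nhds_zero.mem_iff.mp
      (LG.expc_cont.tendsto' 0 1 LG.expc_zero hW)
    obtain ⟨n, hn⟩ := ((tendsto_order.mp hr_lim).2 ρ' hρ').exists
    exact ⟨n, image_subset_iff.mpr ((preimage_mono (Iio_subset_Iio hn.le)).trans hρ'W)⟩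
  · obtain ⟨σ, hσ, hKσ⟩ := φ.exists_lt_subset_image_preimage_Iic hφe hQc (hsub n) hK hKV
    have hC := LG.closure_conjugates_subset (hcpt σ).isClosed hKσ
    exact ⟨(hcpt σ).of_isClosed_subset isClosed_closure hC,
      hC.trans (image_mono (preimage_mono (Iic_subset_Iio.mpr hσ)))⟩

/-- **Lemma.** Let `G ⊆ G_ℂ` be a connected Lie group whose Lie algebra `L(G)` is
compact.  Then there is a basis `(Vₙ)` of open, connected, relatively compact
identity neighbourhoods in `G_ℂ` with `closure (V (n+1)) ⊆ V n` and
`g Vₙ g⁻¹ = Vₙ` for all `n` and `g ∈ G`; in addition one can achieve that for each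
`n` and each compact `K ⊆ Vₙ` the set `{g x g⁻¹ : g ∈ G, x ∈ K}` has compact
closure contained in `Vₙ`. -/
theorem statement15
    {kc : ℕ} {Gc : Type*} [Group Gc] [TopologicalSpace Gc] [IsTopologicalGroup Gc]
    [ChartedSpace (EuclideanSpace ℂ (Fin kc)) Gc]
    [LieGroup 𝓘(ℂ, EuclideanSpace ℂ (Fin kc)) (⊤ : ℕ∞) Gc]
    (H : Subgroup Gc) [ConnectedSpace H]
    -- the Lie algebra of `G` is compact
    (LG : CompactLieAlgebraData (EuclideanSpace ℂ (Fin kc)) H) :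
    ∃ V : ℕ → Set Gc,
      (∀ n, IsOpen (V n)) ∧
      (∀ n, IsConnected (V n)) ∧
      (∀ n, IsCompact (closure (V n))) ∧
      (∀ n, (1 : Gc) ∈ V n) ∧
      (∀ n, closure (V (n + 1)) ⊆ V n) ∧
      -- `(Vₙ)` is a neighbourhood basis at `1`
      (∀ W ∈ 𝓝 (1 : Gc), ∃ n, V n ⊆ W) ∧
      -- conjugation invariance under `G`
      (∀ (n : ℕ) (g : H), (fun z => (g : Gc) * z * (g : Gc)⁻¹) '' V n = V n) ∧
      -- compact closures of `G`-conjugates of compact subsets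
      (∀ (n : ℕ) (K : Set Gc), K ⊆ V n → IsCompact K →
        IsCompact (closure {z : Gc | ∃ g : H, ∃ x ∈ K, z = (g : Gc) * x * (g : Gc)⁻¹}) ∧
        closure {z : Gc | ∃ g : H, ∃ x ∈ K, z = (g : Gc) * x * (g : Gc)⁻¹} ⊆ V n) :=
  statement15_general H LG
end
end
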